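/- arXiv:1911.03539 — 2 statements merged into one kernel-verified Lean document; each statement's English description precedes it below -/
import Mathlib

section
/- The squared Gelbrich distance G((μ_1,Σ_1),(μ_2,Σ_2))^2 equals the optimal value of the semidefinite program: minimize ||μ_1-μ_2||^2 + Tr[Σ_1 + Σ_2 - 2C] over C ∈ R^{d×d} subject to the block matrix [[Σ_1, C],[C^T, Σ_2]] being positive semidefinite. -/
open Matrix
noncomputable section
open scoped Classical

/-- Positive semidefinite square root (0 if not PSD). -/
def psdSqrt {d : ℕ} (A : Matrix (Fin d) (Fin d) ℝ) : Matrix (Fin d) (Fin d) ℝ :=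
  if h : A.PosSemidef then
    (h.1.eigenvectorUnitary : Matrix (Fin d) (Fin d) ℝ) *
      diagonal ((↑) ∘ Real.sqrt ∘ h.1.eigenvalues) *
      (star h.1.eigenvectorUnitary : Matrix (Fin d) (Fin d) ℝ)
  else 0

/-- Frobenius norm. -/
def frob {d : ℕ} (A : Matrix (Fin d) (Fin d) ℝ) : ℝ := Real.sqrt (Aᵀ * A).trace

/-- Trace inner product. -/
def ip {d : ℕ} (A B : Matrix (Fin d) (Fin d) ℝ) : ℝ := (Aᵀ * B).trace

/-- Largest eigenvalue of a symmetric matrix (0 if not symmetric). -/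
def lamMax {d : ℕ} (A : Matrix (Fin d) (Fin d) ℝ) : ℝ :=
  if h : A.IsHermitian then ⨆ i, h.eigenvalues i else 0

/-- Smallest eigenvalue of a symmetric matrix (0 if not symmetric). -/
def lamMin {d : ℕ} (A : Matrix (Fin d) (Fin d) ℝ) : ℝ :=
  if h : A.IsHermitian then ⨅ i, h.eigenvalues i else 0

/-- Gelbrich distance between two mean–covariance pairs. -/
def gelbrich {d : ℕ} (μ₁ μ₂ : EuclideanSpace ℝ (Fin d))
    (S₁ S₂ : Matrix (Fin d) (Fin d) ℝ) : ℝ :=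
  Real.sqrt (‖μ₁ - μ₂‖ ^ 2 + (S₁ + S₂ - 2 • psdSqrt (psdSqrt S₂ * S₁ * psdSqrt S₂)).trace)

namespace GelbrichAux

open Polynomial

variable {n m : Type*} [Fintype n] [DecidableEq n] [Fintype m] [DecidableEq m]

private lemma map_charpoly_eq (A : Matrix n n ℝ) :
    algebraMap ℝ[X] (FractionRing ℝ[X]) A.charpoly =
      Matrix.det (algebraMap ℝ[X] (FractionRing ℝ[X]) X •
          (1 : Matrix n n (FractionRing ℝ[X])) -
        A.map fun a => algebraMap ℝ[X] (FractionRing ℝ[X]) (C a)) := by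
  rw [Matrix.charpoly, RingHom.map_det]
  congr 1
  ext i j
  rcases eq_or_ne i j with rfl | h
  · simp [Matrix.charmatrix_apply_eq, Matrix.map_apply, Matrix.smul_apply, smul_eq_mul,
      Matrix.one_apply, Algebra.algebraMap_eq_smul_one, sub_smul]
  · simp [Matrix.charmatrix_apply_ne _ _ _ h, Matrix.map_apply, Matrix.smul_apply, smul_eq_mul,
      Matrix.one_apply_ne h]

lemma charpoly_mul_comm' (A B : Matrix n n ℝ) : (A * B).charpoly = (B * A).charpoly := by
  have hf : Function.Injective (algebraMap ℝ[X] (FractionRing ℝ[X])) :=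
    IsFractionRing.injective _ _
  apply hf
  rw [map_charpoly_eq, map_charpoly_eq]
  set f := algebraMap ℝ[X] (FractionRing ℝ[X]) with hfdef
  set x : FractionRing ℝ[X] := f X with hx
  have hx0 : x ≠ 0 := by
    intro h
    exact Polynomial.X_ne_zero (hf (h.trans (map_zero f).symm))
  set c : ℝ →+* FractionRing ℝ[X] := f.comp (Polynomial.C : ℝ →+* ℝ[X]) with hcdef
  have hmap : ∀ M N : Matrix n n ℝ, (M * N).map (fun a => f (C a)) =
      M.map (fun a => f (C a)) * N.map (fun a => f (C a)) := by
    intro M N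
    show (M * N).map c = M.map c * N.map c
    exact Matrix.map_mul
  have key : ∀ M N : Matrix n n (FractionRing ℝ[X]),
      (x • 1 - M * N).det = x ^ Fintype.card n * (1 - (x⁻¹ • M) * N).det := by
    intro M N
    have h1 : x • (1 : Matrix n n (FractionRing ℝ[X])) - M * N
        = x • (1 - (x⁻¹ • M) * N) := by
      rw [smul_sub, Matrix.smul_mul, smul_smul, mul_inv_cancel₀ hx0, one_smul]
    rw [h1, Matrix.det_smul, Fintype.card]
  rw [hmap A B, hmap B A, key, key]
  congr 1
  rw [Matrix.det_one_sub_mul_comm]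
  congr 2
  rw [Matrix.mul_smul, Matrix.smul_mul]

lemma charpoly_diagonal' (v : n → ℝ) :
    (Matrix.diagonal v).charpoly = ∏ i, ((X : ℝ[X]) - C (v i)) := by
  rw [Matrix.charpoly]
  have h : charmatrix (Matrix.diagonal v) = Matrix.diagonal fun i => (X : ℝ[X]) - C (v i) := by
    ext i j
    rcases eq_or_ne i j with rfl | h
    · simp [Matrix.charmatrix_apply_eq]
    · simp [Matrix.charmatrix_apply_ne _ _ _ h, Matrix.diagonal_apply_ne _ h]
  rw [h, Matrix.det_diagonal]

lemma charpoly_zero' : (0 : Matrix n n ℝ).charpoly = X ^ Fintype.card n := by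
  rw [← Matrix.diagonal_zero, charpoly_diagonal']
  simp [Finset.card_univ]

lemma spectral_real {G : Matrix n n ℝ} (hG : G.IsHermitian) :
    G = hG.eigenvectorUnitary * Matrix.diagonal hG.eigenvalues
        * star (hG.eigenvectorUnitary : Matrix n n ℝ) := by
  have h := hG.spectral_theorem
  rwa [RCLike.ofReal_real_eq_id, Function.id_comp] at h

lemma conj_diag_mul {G : Matrix n n ℝ} (hG : G.IsHermitian) (f g : n → ℝ) :
    (hG.eigenvectorUnitary * Matrix.diagonal f * star (hG.eigenvectorUnitary : Matrix n n ℝ)) *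
      (hG.eigenvectorUnitary * Matrix.diagonal g * star (hG.eigenvectorUnitary : Matrix n n ℝ)) =
    hG.eigenvectorUnitary * Matrix.diagonal (fun i => f i * g i)
      * star (hG.eigenvectorUnitary : Matrix n n ℝ) := by
  have h : star (hG.eigenvectorUnitary : Matrix n n ℝ) * hG.eigenvectorUnitary = 1 :=
    Matrix.UnitaryGroup.star_mul_self _
  calc (hG.eigenvectorUnitary * Matrix.diagonal f * star (hG.eigenvectorUnitary : Matrix n n ℝ)) *
      (hG.eigenvectorUnitary * Matrix.diagonal g * star (hG.eigenvectorUnitary : Matrix n n ℝ))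
      = hG.eigenvectorUnitary * (Matrix.diagonal f *
        ((star (hG.eigenvectorUnitary : Matrix n n ℝ) * hG.eigenvectorUnitary) *
          Matrix.diagonal g)) * star (hG.eigenvectorUnitary : Matrix n n ℝ) := by
        simp only [Matrix.mul_assoc]
    _ = _ := by rw [h, Matrix.one_mul, Matrix.diagonal_mul_diagonal]

lemma conj_diag_herm {G : Matrix n n ℝ} (hG : G.IsHermitian) (f : n → ℝ) :
    (hG.eigenvectorUnitary * Matrix.diagonal f
        * star (hG.eigenvectorUnitary : Matrix n n ℝ)).IsHermitian := by
  unfold Matrix.IsHermitian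
  rw [Matrix.conjTranspose_mul, Matrix.conjTranspose_mul]
  simp [Matrix.star_eq_conjTranspose, Matrix.diagonal_conjTranspose, Matrix.mul_assoc]

lemma trace_conj_diag {G : Matrix n n ℝ} (hG : G.IsHermitian) (f : n → ℝ) :
    (hG.eigenvectorUnitary * Matrix.diagonal f
      * star (hG.eigenvectorUnitary : Matrix n n ℝ)).trace = ∑ i, f i := by
  have h : star (hG.eigenvectorUnitary : Matrix n n ℝ) * hG.eigenvectorUnitary = 1 :=
    Matrix.UnitaryGroup.star_mul_self _
  rw [Matrix.trace_mul_cycle, h, Matrix.one_mul, Matrix.trace_diagonal]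

/-- Positive semidefinite square root of a PSD real matrix. -/
def _root_.Matrix.PosSemidef.sqrt {G : Matrix n n ℝ} (hG : G.PosSemidef) : Matrix n n ℝ :=
  (hG.1.eigenvectorUnitary : Matrix n n ℝ) *
    diagonal ((↑) ∘ Real.sqrt ∘ hG.1.eigenvalues) *
    (star hG.1.eigenvectorUnitary : Matrix n n ℝ)

lemma sqrt_eq' {G : Matrix n n ℝ} (hG : G.PosSemidef) :
    hG.sqrt = hG.1.eigenvectorUnitary
        * Matrix.diagonal (fun i => Real.sqrt (hG.1.eigenvalues i))
        * star (hG.1.eigenvectorUnitary : Matrix n n ℝ) := by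
  rw [Matrix.PosSemidef.sqrt]
  rfl

lemma _root_.Matrix.PosSemidef.sqrt_mul_self {G : Matrix n n ℝ} (hG : G.PosSemidef) :
    hG.sqrt * hG.sqrt = G := by
  rw [sqrt_eq', conj_diag_mul hG.1]
  have h : (fun i => Real.sqrt (hG.1.eigenvalues i) * Real.sqrt (hG.1.eigenvalues i))
      = hG.1.eigenvalues := funext fun i => Real.mul_self_sqrt (hG.eigenvalues_nonneg i)
  rw [h]
  exact (spectral_real hG.1).symm

lemma _root_.Matrix.PosSemidef.posSemidef_sqrt {G : Matrix n n ℝ} (hG : G.PosSemidef) :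
    hG.sqrt.PosSemidef := by
  rw [sqrt_eq']
  have hd : (Matrix.diagonal (fun i => Real.sqrt (hG.1.eigenvalues i))).PosSemidef :=
    Matrix.posSemidef_diagonal_iff.mpr (fun i => Real.sqrt_nonneg _)
  have := hd.mul_mul_conjTranspose_same (hG.1.eigenvectorUnitary : Matrix n n ℝ)
  rwa [← Matrix.star_eq_conjTranspose] at this

lemma _root_.Matrix.posSemidef_iff_eq_transpose_mul_self {G : Matrix n n ℝ} :
    G.PosSemidef ↔ ∃ B : Matrix n n ℝ, G = Bᴴ * B := by
  constructor
  · intro hG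
    refine ⟨hG.sqrt, ?_⟩
    rw [hG.posSemidef_sqrt.1, hG.sqrt_mul_self]
  · rintro ⟨B, rfl⟩
    exact Matrix.posSemidef_conjTranspose_mul_self B

lemma trace_sqrt_eq {G : Matrix n n ℝ} (hG : G.PosSemidef) :
    hG.sqrt.trace = ∑ i, Real.sqrt (hG.1.eigenvalues i) :=
  by rw [sqrt_eq', trace_conj_diag]

lemma charpoly_isHermitian' {G : Matrix n n ℝ} (hG : G.IsHermitian) :
    G.charpoly = ∏ i, ((X : ℝ[X]) - C (hG.eigenvalues i)) := by
  have h1 : G.charpoly = (Matrix.diagonal hG.eigenvalues).charpoly := by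
    conv_lhs => rw [spectral_real hG]
    rw [Matrix.mul_assoc, charpoly_mul_comm', Matrix.mul_assoc,
      Matrix.UnitaryGroup.star_mul_self, Matrix.mul_one]
  rw [h1, charpoly_diagonal']

lemma roots_charpoly_eq {G : Matrix n n ℝ} (hG : G.IsHermitian) :
    G.charpoly.roots = Finset.univ.val.map hG.eigenvalues := by
  have h2 : Finset.univ.val.map (fun i => (X : ℝ[X]) - C (hG.eigenvalues i))
      = (Finset.univ.val.map hG.eigenvalues).map (fun a => (X : ℝ[X]) - C a) := by
    rw [Multiset.map_map]; rfl
  rw [charpoly_isHermitian' hG, Finset.prod_eq_multiset_prod, h2]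
  exact Polynomial.roots_multiset_prod_X_sub_C _

lemma trace_sqrt_eq_roots {G : Matrix n n ℝ} (hG : G.PosSemidef) :
    hG.sqrt.trace = (G.charpoly.roots.map Real.sqrt).sum := by
  rw [trace_sqrt_eq, roots_charpoly_eq hG.1, Multiset.map_map, Finset.sum]
  rfl

lemma cs_sum (v w : n → ℝ) :
    ∑ j, v j * w j ≤ Real.sqrt (∑ j, v j ^ 2) * Real.sqrt (∑ j, w j ^ 2) := by
  have h := Finset.sum_mul_sq_le_sq_mul_sq Finset.univ v w
  calc ∑ j, v j * w j ≤ |∑ j, v j * w j| := le_abs_self _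
    _ = Real.sqrt ((∑ j, v j * w j) ^ 2) := (Real.sqrt_sq_eq_abs _).symm
    _ ≤ Real.sqrt ((∑ j, v j ^ 2) * ∑ j, w j ^ 2) := Real.sqrt_le_sqrt h
    _ = _ := Real.sqrt_mul (by positivity) _

lemma trace_le_trace_sqrt (Y : Matrix n n ℝ) :
    Y.trace ≤ (Matrix.posSemidef_conjTranspose_mul_self Y).sqrt.trace := by
  set hG := Matrix.posSemidef_conjTranspose_mul_self Y with hGdef
  set U : Matrix n n ℝ := (hG.1.eigenvectorUnitary : Matrix n n ℝ) with hUdef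
  have h1 : star U * U = 1 := Matrix.UnitaryGroup.star_mul_self _
  have h2 : U * star U = 1 := hG.1.eigenvectorUnitary.2.2
  have hdiag : star U * (Yᴴ * Y) * U = Matrix.diagonal hG.1.eigenvalues := by
    conv_lhs => rw [spectral_real hG.1]
    rw [← hUdef]
    have h : star U * (U * Matrix.diagonal hG.1.eigenvalues * star U) * U
        = (star U * U) * Matrix.diagonal hG.1.eigenvalues * (star U * U) := by
      simp only [Matrix.mul_assoc]
    rw [h, h1, Matrix.one_mul, Matrix.mul_one]
  have htr : Y.trace = (star U * Y * U).trace := by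
    rw [Matrix.trace_mul_cycle, h2, Matrix.one_mul]
  have key : ∀ i, (star U * Y * U) i i ≤ Real.sqrt (hG.1.eigenvalues i) := by
    intro i
    set v : n → ℝ := fun j => U j i with hv
    set w : n → ℝ := fun j => (Y * U) j i with hw
    have e1 : (star U * Y * U) i i = ∑ j, v j * w j := by
      rw [Matrix.mul_assoc, Matrix.mul_apply]
      exact Finset.sum_congr rfl fun j _ => by
        simp [Matrix.star_apply, hv, hw]
    have e2 : ∑ j, v j ^ 2 = 1 := by
      have h3 : (star U * U) i i = 1 := by rw [h1, Matrix.one_apply_eq]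
      rw [Matrix.mul_apply] at h3
      simpa [Matrix.star_apply, sq, hv] using h3
    have e3 : ∑ j, w j ^ 2 = hG.1.eigenvalues i := by
      have h4 : star U * (Yᴴ * Y) * U = (Y * U)ᴴ * (Y * U) := by
        rw [Matrix.conjTranspose_mul, Matrix.star_eq_conjTranspose]
        simp only [Matrix.mul_assoc]
      have h5 : ((Y * U)ᴴ * (Y * U)) i i = hG.1.eigenvalues i := by
        rw [← h4, hdiag, Matrix.diagonal_apply_eq]
      rw [Matrix.mul_apply] at h5
      simpa [Matrix.conjTranspose_apply, sq, hw] using h5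
    calc (star U * Y * U) i i = ∑ j, v j * w j := e1
      _ ≤ Real.sqrt (∑ j, v j ^ 2) * Real.sqrt (∑ j, w j ^ 2) := cs_sum v w
      _ = Real.sqrt (hG.1.eigenvalues i) := by rw [e2, e3, Real.sqrt_one, one_mul]
  rw [htr, trace_sqrt_eq]
  rw [Matrix.trace]
  exact Finset.sum_le_sum fun i _ => key i

lemma sqrt_congr {G H : Matrix n n ℝ} (h : G = H) (hG : G.PosSemidef) (hH : H.PosSemidef) :
    hG.sqrt = hH.sqrt := by subst h; rfl

lemma ct_fromRows {m₁ m₂ : Type*} (A : Matrix m₁ n ℝ) (B : Matrix m₂ n ℝ) :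
    (fromRows A B)ᴴ = fromCols Aᴴ Bᴴ := by
  rw [Matrix.conjTranspose_eq_transpose_of_trivial, Matrix.transpose_fromRows]
  simp [Matrix.conjTranspose_eq_transpose_of_trivial]

lemma ct_fromColumns {m₁ m₂ : Type*} (A : Matrix n m₁ ℝ) (B : Matrix n m₂ ℝ) :
    (fromCols A B)ᴴ = fromRows Aᴴ Bᴴ := by
  rw [Matrix.conjTranspose_eq_transpose_of_trivial, Matrix.transpose_fromCols]
  simp [Matrix.conjTranspose_eq_transpose_of_trivial]

/-- `Tr √(N Nᴴ) = Tr √(Nᴴ N)` for a rectangular `N : Matrix (n ⊕ m) n ℝ`. -/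
lemma trace_sqrt_mul_conj_comm (N : Matrix (n ⊕ m) n ℝ) :
    (Matrix.posSemidef_self_mul_conjTranspose N).sqrt.trace
      = (Matrix.posSemidef_conjTranspose_mul_self N).sqrt.trace := by
  rw [trace_sqrt_eq_roots, trace_sqrt_eq_roots]
  have hct : (fromCols N (0 : Matrix (n ⊕ m) m ℝ))ᴴ
      = fromRows Nᴴ (0 : Matrix m (n ⊕ m) ℝ) := by
    rw [Matrix.conjTranspose_eq_transpose_of_trivial, Matrix.transpose_fromCols]
    simp [Matrix.conjTranspose_eq_transpose_of_trivial]
  have e1 : N * Nᴴ = (fromCols N (0 : Matrix (n ⊕ m) m ℝ))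
      * (fromCols N (0 : Matrix (n ⊕ m) m ℝ))ᴴ := by
    rw [hct, Matrix.fromCols_mul_fromRows]
    simp
  have e2 : (fromCols N (0 : Matrix (n ⊕ m) m ℝ))ᴴ * fromCols N (0 : Matrix (n ⊕ m) m ℝ)
      = fromBlocks (Nᴴ * N) 0 0 0 := by
    rw [hct, Matrix.fromRows_mul_fromCols]
    simp
  have hcp : (N * Nᴴ).charpoly = (Nᴴ * N).charpoly * X ^ Fintype.card m := by
    rw [e1, charpoly_mul_comm', e2, Matrix.charpoly_fromBlocks_zero₁₂, charpoly_zero']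
  rw [hcp, Polynomial.roots_mul (mul_ne_zero (Matrix.charpoly_monic _).ne_zero
    (pow_ne_zero _ Polynomial.X_ne_zero)), Polynomial.roots_pow, Polynomial.roots_X]
  simp [Multiset.nsmul_singleton]

lemma trace_nonneg' {G : Matrix n n ℝ} (hG : G.PosSemidef) : 0 ≤ G.trace := by
  obtain ⟨L, hL⟩ := Matrix.posSemidef_iff_eq_transpose_mul_self.mp hG
  rw [hL, Matrix.trace]
  refine Finset.sum_nonneg fun i _ => ?_
  rw [Matrix.diag_apply, Matrix.mul_apply]
  exact Finset.sum_nonneg fun j _ => by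
    simp only [Matrix.conjTranspose_apply, star_trivial]
    exact mul_self_nonneg _

lemma trace_le_of_block {d : ℕ} {A B C : Matrix (Fin d) (Fin d) ℝ}
    (hB : B.PosSemidef)
    (hblock : (fromBlocks A C Cᵀ B).PosSemidef)
    (hM : (hB.sqrt * A * hB.sqrt).PosSemidef) :
    C.trace ≤ hM.sqrt.trace := by
  obtain ⟨L, hL⟩ := Matrix.posSemidef_iff_eq_transpose_mul_self.mp hblock
  set P : Matrix (Fin d ⊕ Fin d) (Fin d) ℝ := L.submatrix id Sum.inl with hP
  set Q : Matrix (Fin d ⊕ Fin d) (Fin d) ℝ := L.submatrix id Sum.inr with hQ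
  have hdecomp : Lᴴ * L = fromBlocks (Pᴴ * P) (Pᴴ * Q) (Qᴴ * P) (Qᴴ * Q) := by
    ext i j
    rcases i with i | i <;> rcases j with j | j <;>
      simp [Matrix.mul_apply, Matrix.conjTranspose_apply, hP, hQ, Matrix.fromBlocks,
        Matrix.submatrix_apply]
  rw [hdecomp] at hL
  have hA : A = Pᴴ * P := by
    have h := congrArg Matrix.toBlocks₁₁ hL; simpa [Matrix.toBlocks_fromBlocks₁₁] using h
  have hC : C = Pᴴ * Q := by
    have h := congrArg Matrix.toBlocks₁₂ hL; simpa [Matrix.toBlocks_fromBlocks₁₂] using h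
  have hBeq : B = Qᴴ * Q := by
    have h := congrArg Matrix.toBlocks₂₂ hL; simpa [Matrix.toBlocks_fromBlocks₂₂] using h
  have hsq : hB.sqrt * hB.sqrt = B := hB.sqrt_mul_self
  have hherm : hB.sqrt.conjTranspose = hB.sqrt := hB.posSemidef_sqrt.1
  have h1 : C.trace = (Q * Pᴴ).trace := by rw [hC, Matrix.trace_mul_comm]
  have h2 := trace_le_trace_sqrt (Q * Pᴴ)
  have hXX : (Q * Pᴴ)ᴴ * (Q * Pᴴ) = (P * hB.sqrt) * (P * hB.sqrt)ᴴ := by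
    rw [Matrix.conjTranspose_mul, Matrix.conjTranspose_conjTranspose,
      Matrix.conjTranspose_mul, hherm]
    calc P * Qᴴ * (Q * Pᴴ) = P * (Qᴴ * Q) * Pᴴ := by simp only [Matrix.mul_assoc]
      _ = P * (hB.sqrt * hB.sqrt) * Pᴴ := by rw [← hBeq, hsq]
      _ = P * hB.sqrt * (hB.sqrt * Pᴴ) := by simp only [Matrix.mul_assoc]
  have h3 : (Matrix.posSemidef_conjTranspose_mul_self (Q * Pᴴ)).sqrt.trace
      = (Matrix.posSemidef_self_mul_conjTranspose (P * hB.sqrt)).sqrt.trace := by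
    rw [sqrt_congr hXX (Matrix.posSemidef_conjTranspose_mul_self (Q * Pᴴ))
      (Matrix.posSemidef_self_mul_conjTranspose (P * hB.sqrt))]
  have h4 := trace_sqrt_mul_conj_comm (P * hB.sqrt)
  have hMM : (P * hB.sqrt)ᴴ * (P * hB.sqrt) = hB.sqrt * A * hB.sqrt := by
    rw [Matrix.conjTranspose_mul, hherm, hA]
    simp only [Matrix.mul_assoc]
  have h5 : (Matrix.posSemidef_conjTranspose_mul_self (P * hB.sqrt)).sqrt.trace
      = hM.sqrt.trace := by
    rw [sqrt_congr hMM (Matrix.posSemidef_conjTranspose_mul_self (P * hB.sqrt)) hM]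
  calc C.trace = (Q * Pᴴ).trace := h1
    _ ≤ _ := h2
    _ = _ := h3
    _ = _ := h4
    _ = hM.sqrt.trace := h5

lemma exists_opt {d : ℕ} {A B : Matrix (Fin d) (Fin d) ℝ}
    (hA : A.PosSemidef) (hB : B.PosSemidef)
    (hM : (hB.sqrt * A * hB.sqrt).PosSemidef) :
    ∃ C : Matrix (Fin d) (Fin d) ℝ, (fromBlocks A C Cᵀ B).PosSemidef ∧
      C.trace = hM.sqrt.trace ∧ (A + B - C - Cᵀ).PosSemidef := by
  have hAherm : hA.sqrt.conjTranspose = hA.sqrt := hA.posSemidef_sqrt.1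
  have hBherm : hB.sqrt.conjTranspose = hB.sqrt := hB.posSemidef_sqrt.1
  set sA := hA.sqrt with hsA
  set sB := hB.sqrt with hsB
  set lam := hM.1.eigenvalues with hlam
  have hlam0 : ∀ i, 0 ≤ lam i := hM.eigenvalues_nonneg
  set g : Fin d → ℝ := fun i => if lam i = 0 then 0 else (Real.sqrt (lam i))⁻¹ with hg
  set chi : Fin d → ℝ := fun i => if lam i = 0 then 0 else 1 with hchi
  set V : Matrix (Fin d) (Fin d) ℝ := (hM.1.eigenvectorUnitary : Matrix (Fin d) (Fin d) ℝ)
    with hV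
  set Rdag : Matrix (Fin d) (Fin d) ℝ := V * Matrix.diagonal g * star V with hRdag
  set Pi : Matrix (Fin d) (Fin d) ℝ := V * Matrix.diagonal chi * star V with hPi
  have hMspec : sB * A * sB = V * Matrix.diagonal lam * star V := spectral_real hM.1
  have hglg : (fun i => g i * lam i * g i) = chi := by
    funext i
    rcases eq_or_ne (lam i) 0 with h0 | h0
    · simp [hg, hchi, h0]
    · have hs : Real.sqrt (lam i) ≠ 0 :=
        ne_of_gt (Real.sqrt_pos.mpr (lt_of_le_of_ne (hlam0 i) (Ne.symm h0)))
      have hl : Real.sqrt (lam i) * Real.sqrt (lam i) = lam i :=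
        Real.mul_self_sqrt (hlam0 i)
      simp only [hg, hchi, if_neg h0]
      field_simp
      rw [sq, hl]
  have hRMR : Rdag * (sB * A * sB) * Rdag = Pi := by
    rw [hMspec, hRdag, conj_diag_mul hM.1, conj_diag_mul hM.1, hglg, hPi]
  have hPi2 : Pi * Pi = Pi := by
    have hcc : (fun i => chi i * chi i) = chi := by
      funext i
      rcases eq_or_ne (lam i) 0 with h0 | h0 <;> simp [hchi, h0]
    rw [hPi, conj_diag_mul hM.1, hcc]
  have hPiherm : Piᴴ = Pi := conj_diag_herm hM.1 chi
  have hRdagherm : Rdagᴴ = Rdag := conj_diag_herm hM.1 g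
  set P : Matrix (Fin d ⊕ Fin d) (Fin d) ℝ := fromRows sA 0 with hPdef
  set Q : Matrix (Fin d ⊕ Fin d) (Fin d) ℝ :=
    fromRows (sA * sB * Rdag * sB) ((1 - Pi) * sB) with hQdef
  have c1 : (sA * sB * Rdag * sB)ᴴ = sB * Rdag * sB * sA := by
    rw [Matrix.conjTranspose_mul (sA * sB * Rdag) sB, Matrix.conjTranspose_mul (sA * sB) Rdag,
      Matrix.conjTranspose_mul sA sB, hAherm, hBherm, hRdagherm]
    simp only [Matrix.mul_assoc]
  have c2 : ((1 - Pi) * sB)ᴴ = sB * (1 - Pi) := by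
    rw [Matrix.conjTranspose_mul (1 - Pi) sB, Matrix.conjTranspose_sub,
      Matrix.conjTranspose_one, hPiherm, hBherm]
  have hPct : Pᴴ = fromCols sA 0 := by
    rw [hPdef, ct_fromRows, hAherm, Matrix.conjTranspose_zero]
  have hQct : Qᴴ = fromCols (sB * Rdag * sB * sA) (sB * (1 - Pi)) := by
    rw [hQdef, ct_fromRows, c1, c2]
  have hPP : Pᴴ * P = A := by
    rw [hPct, hPdef, Matrix.fromCols_mul_fromRows]
    simp [hA.sqrt_mul_self]
    exact hA.sqrt_mul_self
  have hQQ : Qᴴ * Q = B := by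
    rw [hQct, hQdef, Matrix.fromCols_mul_fromRows]
    have t1 : sB * Rdag * sB * sA * (sA * sB * Rdag * sB) = sB * Pi * sB := by
      have h' : sB * Rdag * sB * sA * (sA * sB * Rdag * sB)
          = sB * (Rdag * (sB * (sA * sA) * sB) * Rdag) * sB := by
        simp only [Matrix.mul_assoc]
      rw [h', hA.sqrt_mul_self, hRMR]
    have h12 : (1 - Pi) * (1 - Pi) = 1 - Pi := by
      rw [Matrix.mul_sub, Matrix.sub_mul, Matrix.sub_mul, hPi2]
      simp only [Matrix.one_mul, Matrix.mul_one]
      abel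
    have t2 : sB * (1 - Pi) * ((1 - Pi) * sB) = sB * (1 - Pi) * sB := by
      calc sB * (1 - Pi) * ((1 - Pi) * sB) = sB * ((1 - Pi) * (1 - Pi)) * sB := by
            simp only [Matrix.mul_assoc]
        _ = sB * (1 - Pi) * sB := by rw [h12]
    rw [t1, t2]
    have h3 : sB * Pi * sB + sB * (1 - Pi) * sB = sB * sB := by
      rw [Matrix.mul_sub, Matrix.sub_mul, Matrix.mul_one]
      abel
    rw [h3, hB.sqrt_mul_self]
  have hPQ : Pᴴ * Q = A * sB * Rdag * sB := by
    rw [hPct, hQdef, Matrix.fromCols_mul_fromRows]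
    have h' : sA * (sA * sB * Rdag * sB) = A * sB * Rdag * sB := by
      conv_rhs => rw [← hA.sqrt_mul_self]
      simp only [Matrix.mul_assoc]
      rfl
    simp [h']
  have hCt : (Pᴴ * Q)ᵀ = Qᴴ * P := by
    rw [← Matrix.conjTranspose_eq_transpose_of_trivial, Matrix.conjTranspose_mul Pᴴ Q,
      Matrix.conjTranspose_conjTranspose]
  refine ⟨Pᴴ * Q, ?_, ?_, ?_⟩
  · have hblock : fromBlocks A (Pᴴ * Q) (Pᴴ * Q)ᵀ B
        = (fromCols P Q)ᴴ * fromCols P Q := by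
      rw [ct_fromColumns, Matrix.fromRows_mul_fromCols, hPP, hQQ, hCt]
    rw [hblock]
    exact Matrix.posSemidef_conjTranspose_mul_self _
  · rw [hPQ]
    have e1 : A * sB * Rdag * sB = A * sB * (Rdag * sB) := by simp only [Matrix.mul_assoc]
    rw [e1, Matrix.trace_mul_comm, ← Matrix.mul_assoc]
    have e2 : Rdag * sB * A * sB = Rdag * (sB * A * sB) := by simp only [Matrix.mul_assoc]
    have hlg : (fun i => g i * lam i) = fun i => Real.sqrt (lam i) := by
      funext i
      rcases eq_or_ne (lam i) 0 with h0 | h0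
      · simp [hg, h0, Real.sqrt_eq_zero', h0.le]
      · have hs : Real.sqrt (lam i) ≠ 0 :=
          ne_of_gt (Real.sqrt_pos.mpr (lt_of_le_of_ne (hlam0 i) (Ne.symm h0)))
        have hl : Real.sqrt (lam i) * Real.sqrt (lam i) = lam i :=
          Real.mul_self_sqrt (hlam0 i)
        simp only [hg, if_neg h0]
        field_simp
        rw [sq, hl]
    rw [e2]
    have tr1 : (Rdag * (sB * A * sB)).trace = ∑ i, Real.sqrt (lam i) := by
      rw [hMspec, hRdag, conj_diag_mul hM.1, hlg, trace_conj_diag hM.1]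
    rw [tr1, trace_sqrt_eq]
  · have hkey : A + B - Pᴴ * Q - (Pᴴ * Q)ᵀ = (P - Q)ᴴ * (P - Q) := by
      rw [hCt, Matrix.conjTranspose_sub, Matrix.sub_mul, Matrix.mul_sub, Matrix.mul_sub,
        hPP, hQQ]
      abel
    rw [hkey]
    exact Matrix.posSemidef_conjTranspose_mul_self _

end GelbrichAux

/-- The squared Gelbrich distance equals the optimal value of an SDP. -/
theorem gelbrich_sq_eq_sdp {d : ℕ} (μ₁ μ₂ : EuclideanSpace ℝ (Fin d))
    (S₁ S₂ : Matrix (Fin d) (Fin d) ℝ)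
    (h₁ : S₁.PosSemidef) (h₂ : S₂.PosSemidef) :
    gelbrich μ₁ μ₂ S₁ S₂ ^ 2 =
      sInf { v : ℝ | ∃ C : Matrix (Fin d) (Fin d) ℝ,
        (Matrix.fromBlocks S₁ C Cᵀ S₂).PosSemidef ∧
        v = ‖μ₁ - μ₂‖ ^ 2 + (S₁ + S₂ - 2 • C).trace } := by
  classical
  have hsBps : psdSqrt S₂ = h₂.sqrt := dif_pos h₂
  have hM : (h₂.sqrt * S₁ * h₂.sqrt).PosSemidef := by
    have h := h₁.conjTranspose_mul_mul_same (B := h₂.sqrt)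
    rwa [(h₂.posSemidef_sqrt).1] at h
  have hpsdM : psdSqrt (psdSqrt S₂ * S₁ * psdSqrt S₂) = hM.sqrt := by
    rw [hsBps]
    exact dif_pos hM
  obtain ⟨C₀, hC₀psd, hC₀tr, hC₀res⟩ := GelbrichAux.exists_opt h₁ h₂ hM
  set v := ‖μ₁ - μ₂‖ ^ 2 + (S₁ + S₂ - 2 • hM.sqrt).trace with hv
  have trace2 : ∀ X : Matrix (Fin d) (Fin d) ℝ,
      (S₁ + S₂ - 2 • X).trace = S₁.trace + S₂.trace - 2 * X.trace := by
    intro X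
    rw [Matrix.trace_sub, Matrix.trace_add, Matrix.trace_smul]
    simp [smul_eq_mul]
  have hvC0 : v = ‖μ₁ - μ₂‖ ^ 2 + (S₁ + S₂ - 2 • C₀).trace := by
    rw [hv, trace2, trace2, hC₀tr]
  have hv0 : 0 ≤ v := by
    have h5 := GelbrichAux.trace_nonneg' hC₀res
    have h6 : (S₁ + S₂ - C₀ - C₀ᵀ).trace
        = S₁.trace + S₂.trace - C₀.trace - C₀.trace := by
      rw [Matrix.trace_sub, Matrix.trace_sub, Matrix.trace_add, Matrix.trace_transpose]
    have h7 : (0:ℝ) ≤ ‖μ₁ - μ₂‖ ^ 2 := sq_nonneg _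
    rw [h6] at h5
    rw [hv, trace2, ← hC₀tr]
    linarith
  have hgel : gelbrich μ₁ μ₂ S₁ S₂ ^ 2 = v := by
    unfold gelbrich
    rw [hpsdM]
    exact Real.sq_sqrt hv0
  rw [hgel]
  have hlow : ∀ y ∈ { w : ℝ | ∃ C : Matrix (Fin d) (Fin d) ℝ,
      (Matrix.fromBlocks S₁ C Cᵀ S₂).PosSemidef ∧
      w = ‖μ₁ - μ₂‖ ^ 2 + (S₁ + S₂ - 2 • C).trace }, v ≤ y := by
    rintro y ⟨C, hCpsd, rfl⟩
    have h8 := GelbrichAux.trace_le_of_block h₂ hCpsd hM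
    rw [hv, trace2, trace2]
    linarith
  have hmem : v ∈ { w : ℝ | ∃ C : Matrix (Fin d) (Fin d) ℝ,
      (Matrix.fromBlocks S₁ C Cᵀ S₂).PosSemidef ∧
      w = ‖μ₁ - μ₂‖ ^ 2 + (S₁ + S₂ - 2 • C).trace } := ⟨C₀, hC₀psd, hvC0⟩
  exact le_antisymm (le_csInf ⟨_, hmem⟩ hlow) (csInf_le ⟨v, hlow⟩ hmem)
end
end

section
/- The squared Gelbrich distance G((μ_1,Σ_1),(μ_2,Σ_2))^2 is jointly convex in (μ_1, μ_2, Σ_1, Σ_2) on R^d × R^d × S_+^d × S_+^d. -/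
open Matrix
noncomputable section
open scoped Classical

variable {d : ℕ}

open scoped MatrixOrder in
lemma psdSqrt_of_psd {A : Matrix (Fin d) (Fin d) ℝ} (hA : A.PosSemidef) :
    psdSqrt A = CFC.sqrt A := by
  rw [CFC.sqrt_eq_real_sqrt A hA.nonneg, cfcₙ_eq_cfc (hf0 := Real.sqrt_zero), hA.1.cfc_eq,
    psdSqrt, dif_pos hA, IsHermitian.cfc, Unitary.conjStarAlgAut_apply]
  rfl

open scoped MatrixOrder in
lemma psdSqrt_posSemidef {A : Matrix (Fin d) (Fin d) ℝ} (hA : A.PosSemidef) :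
    (psdSqrt A).PosSemidef := by rw [psdSqrt_of_psd hA]; exact (CFC.sqrt_nonneg A).posSemidef

open scoped MatrixOrder in
lemma psdSqrt_mul_self {A : Matrix (Fin d) (Fin d) ℝ} (hA : A.PosSemidef) :
    psdSqrt A * psdSqrt A = A := by rw [psdSqrt_of_psd hA]; exact CFC.sqrt_mul_sqrt_self A hA.nonneg

open scoped MatrixOrder in
lemma psdSqrt_eq_of_sq {A B : Matrix (Fin d) (Fin d) ℝ} (hA : A.PosSemidef)
    (hB : B.PosSemidef) (h : B * B = A) : psdSqrt A = B := by
  rw [psdSqrt_of_psd hA]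
  exact CFC.sqrt_unique h hB.nonneg

lemma psd_transpose {A : Matrix (Fin d) (Fin d) ℝ} (hA : A.PosSemidef) : Aᵀ = A := by
  have := hA.1.eq
  rwa [conjTranspose_eq_transpose_of_trivial] at this

lemma psdSqrt_transpose {A : Matrix (Fin d) (Fin d) ℝ} (hA : A.PosSemidef) :
    (psdSqrt A)ᵀ = psdSqrt A := psd_transpose (psdSqrt_posSemidef hA)

/-- Spectral package for a PSD real matrix. -/
lemma spectral_package {A : Matrix (Fin d) (Fin d) ℝ} (hA : A.PosSemidef) :
    ∃ (lam : Fin d → ℝ) (V : Matrix (Fin d) (Fin d) ℝ),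
      (∀ i, 0 ≤ lam i) ∧ Vᵀ * V = 1 ∧ V * Vᵀ = 1 ∧
      A = V * diagonal lam * Vᵀ ∧ psdSqrt A = V * diagonal (fun i => Real.sqrt (lam i)) * Vᵀ := by
  refine ⟨hA.1.eigenvalues, hA.1.eigenvectorUnitary, hA.eigenvalues_nonneg, ?_, ?_, ?_, ?_⟩
  · have := hA.1.eigenvectorUnitary.2
    rw [Matrix.mem_unitaryGroup_iff'] at this
    rw [← conjTranspose_eq_transpose_of_trivial]
    exact this
  · have := hA.1.eigenvectorUnitary.2
    rw [Matrix.mem_unitaryGroup_iff] at this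
    rw [← conjTranspose_eq_transpose_of_trivial]
    exact this
  · have h := hA.1.spectral_theorem; rw [Unitary.conjStarAlgAut_apply] at h
    rw [← conjTranspose_eq_transpose_of_trivial]
    rw [← Matrix.star_eq_conjTranspose]
    exact h
  · rw [psdSqrt, dif_pos hA,
      ← conjTranspose_eq_transpose_of_trivial, ← Matrix.star_eq_conjTranspose]
    congr 1
variable {d : ℕ}

lemma dot_sum_left {s : Finset (Fin d)} (f : Fin d → (Fin d → ℝ)) (y : Fin d → ℝ) :
    (∑ i ∈ s, f i) ⬝ᵥ y = ∑ i ∈ s, f i ⬝ᵥ y := by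
  simp only [dotProduct, Finset.sum_apply, Finset.sum_mul]
  exact Finset.sum_comm

/-- Bessel's inequality for a finite orthonormal family w.r.t. dot product. -/
lemma bessel {s : Finset (Fin d)} {x : Fin d → (Fin d → ℝ)}
    (hx : ∀ i ∈ s, ∀ j ∈ s, x i ⬝ᵥ x j = if i = j then 1 else 0)
    (y : Fin d → ℝ) : ∑ i ∈ s, (x i ⬝ᵥ y) ^ 2 ≤ y ⬝ᵥ y := by
  set c : Fin d → ℝ := fun i => x i ⬝ᵥ y with hc
  set r : Fin d → ℝ := y - ∑ i ∈ s, c i • x i with hr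
  have hry : r ⬝ᵥ y = y ⬝ᵥ y - ∑ i ∈ s, c i ^ 2 := by
    rw [hr, sub_dotProduct, dot_sum_left]
    congr 1
    refine Finset.sum_congr rfl fun i hi => ?_
    rw [smul_dotProduct, smul_eq_mul, sq]
  have hrx : ∀ j ∈ s, r ⬝ᵥ x j = 0 := by
    intro j hj
    rw [hr, sub_dotProduct, dot_sum_left]
    have : ∑ i ∈ s, (c i • x i) ⬝ᵥ x j = c j := by
      rw [Finset.sum_eq_single j]
      · rw [smul_dotProduct, hx j hj j hj, if_pos rfl, smul_eq_mul, mul_one]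
      · intro i hi hij
        rw [smul_dotProduct, hx i hi j hj, if_neg hij, smul_eq_mul, mul_zero]
      · intro h; exact absurd hj h
    rw [this, dotProduct_comm y (x j)]
    simp [hc]
  have hrr : r ⬝ᵥ r = y ⬝ᵥ y - ∑ i ∈ s, c i ^ 2 := by
    have step : r ⬝ᵥ r = r ⬝ᵥ y - ∑ i ∈ s, c i * (r ⬝ᵥ x i) := by
      nth_rewrite 2 [hr]
      rw [dotProduct_sub]
      congr 1
      rw [dotProduct_comm, dot_sum_left]
      refine Finset.sum_congr rfl fun i hi => ?_
      rw [smul_dotProduct, smul_eq_mul, dotProduct_comm]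
    rw [step, hry]
    have : ∑ i ∈ s, c i * (r ⬝ᵥ x i) = 0 :=
      Finset.sum_eq_zero fun i hi => by rw [hrx i hi, mul_zero]
    rw [this, sub_zero]
  have h0 : 0 ≤ r ⬝ᵥ r :=
    Finset.sum_nonneg fun k _ => mul_self_nonneg (r k)
  linarith [h0, hrr.symm.le]

lemma cs_sum {s : Finset (Fin d)} (f g : Fin d → ℝ) :
    ∑ i ∈ s, f i * g i ≤ Real.sqrt (∑ i ∈ s, f i ^ 2) * Real.sqrt (∑ i ∈ s, g i ^ 2) := by
  have h := Finset.sum_mul_sq_le_sq_mul_sq s f g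
  calc ∑ i ∈ s, f i * g i ≤ |∑ i ∈ s, f i * g i| := le_abs_self _
    _ = Real.sqrt ((∑ i ∈ s, f i * g i) ^ 2) := (Real.sqrt_sq_eq_abs _).symm
    _ ≤ Real.sqrt ((∑ i ∈ s, f i ^ 2) * ∑ i ∈ s, g i ^ 2) := Real.sqrt_le_sqrt h
    _ = _ := Real.sqrt_mul (Finset.sum_nonneg fun i _ => sq_nonneg _) _

lemma dot_sum_right {s : Finset (Fin d)} (y : Fin d → ℝ) (f : Fin d → (Fin d → ℝ)) :
    y ⬝ᵥ (∑ i ∈ s, f i) = ∑ i ∈ s, y ⬝ᵥ f i := by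
  rw [dotProduct_comm, dot_sum_left]
  exact Finset.sum_congr rfl fun i _ => dotProduct_comm _ _

lemma mulVec_sum' {s : Finset (Fin d)} (M : Matrix (Fin d) (Fin d) ℝ)
    (f : Fin d → (Fin d → ℝ)) :
    M *ᵥ (∑ i ∈ s, f i) = ∑ i ∈ s, M *ᵥ f i := by
  ext k
  simp [Matrix.mulVec, dotProduct, Finset.sum_apply, Finset.mul_sum]
  exact Finset.sum_comm

lemma psd_tmul (M : Matrix (Fin d) (Fin d) ℝ) : (Mᵀ * M).PosSemidef := by
  have := Matrix.posSemidef_conjTranspose_mul_self M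
  rwa [conjTranspose_eq_transpose_of_trivial] at this

lemma mulVec_dot (M : Matrix (Fin d) (Fin d) ℝ) (a b : Fin d → ℝ) :
    (M *ᵥ a) ⬝ᵥ (M *ᵥ b) = a ⬝ᵥ ((Mᵀ * M) *ᵥ b) := by
  rw [dotProduct_mulVec (M *ᵥ a) M b, ← Matrix.vecMul_transpose M a,
    Matrix.vecMul_vecMul, dotProduct_mulVec a]

/-- Trace norm. -/
def traceNorm (M : Matrix (Fin d) (Fin d) ℝ) : ℝ := (psdSqrt (Mᵀ * M)).trace

/-- Singular value frame data for a square real matrix. -/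
lemma singular_package (M : Matrix (Fin d) (Fin d) ℝ) :
    ∃ (lam : Fin d → ℝ) (w : Fin d → (Fin d → ℝ)),
      (∀ i, 0 ≤ lam i) ∧
      (∀ i j, w i ⬝ᵥ w j = if i = j then 1 else 0) ∧
      (∀ j, (Mᵀ * M) *ᵥ w j = lam j • w j) ∧
      (∀ y k, ∑ j, (w j ⬝ᵥ y) * w j k = y k) ∧
      traceNorm M = ∑ j, Real.sqrt (lam j) := by
  obtain ⟨lam, V, hlam, hVtV, hVVt, hdecomp, hsqrt⟩ := spectral_package (psd_tmul M)
  refine ⟨lam, fun j k => V k j, hlam, ?_, ?_, ?_, ?_⟩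
  · intro i j
    have : (Vᵀ * V) i j = (1 : Matrix (Fin d) (Fin d) ℝ) i j := by rw [hVtV]
    simpa [Matrix.mul_apply, Matrix.one_apply, dotProduct, Matrix.transpose_apply] using this
  · intro j
    have hAV : (Mᵀ * M) * V = V * diagonal lam := by
      rw [hdecomp, Matrix.mul_assoc, Matrix.mul_assoc, hVtV, Matrix.mul_one]
    ext k
    have h1 : ((Mᵀ * M) *ᵥ fun k => V k j) k = ((Mᵀ * M) * V) k j := by
      simp [Matrix.mulVec, dotProduct, Matrix.mul_apply]
    rw [h1, hAV, Matrix.mul_diagonal]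
    simp [mul_comm]
  · intro y k
    have h1 : ∀ l, (V * Vᵀ) k l = ∑ j, V k j * V l j := by
      intro l; simp [Matrix.mul_apply, Matrix.transpose_apply]
    have h2 : ∑ l, (V * Vᵀ) k l * y l = y k := by
      rw [hVVt]; simp [Matrix.one_apply]
    have h3 : ∑ j, ((fun kk => V kk j) ⬝ᵥ y) * V k j = ∑ j, ∑ l, V l j * y l * V k j := by
      refine Finset.sum_congr rfl fun j _ => ?_
      rw [dotProduct, Finset.sum_mul]
    rw [h3, Finset.sum_comm]
    calc ∑ l, ∑ j, V l j * y l * V k j = ∑ l, (V * Vᵀ) k l * y l := by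
          refine Finset.sum_congr rfl fun l _ => ?_
          rw [h1 l, Finset.sum_mul]
          exact Finset.sum_congr rfl fun j _ => by ring
      _ = y k := h2
  · rw [traceNorm, hsqrt, Matrix.trace_mul_cycle, hVtV, Matrix.one_mul, Matrix.trace_diagonal]

/-- Key duality bound: pairing against orthonormal families is at most the trace norm. -/
lemma traceNorm_dual (M : Matrix (Fin d) (Fin d) ℝ) {s : Finset (Fin d)}
    {u v : Fin d → (Fin d → ℝ)}
    (hu : ∀ i ∈ s, ∀ j ∈ s, u i ⬝ᵥ u j = if i = j then 1 else 0)
    (hv : ∀ i ∈ s, ∀ j ∈ s, v i ⬝ᵥ v j = if i = j then 1 else 0) :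
    ∑ i ∈ s, u i ⬝ᵥ (M *ᵥ v i) ≤ traceNorm M := by
  obtain ⟨lam, w, hlam, hw, hMw, hres, hN⟩ := singular_package M
  -- expand each v i in the w basis
  have hexp : ∀ i, u i ⬝ᵥ (M *ᵥ v i) = ∑ j, (w j ⬝ᵥ v i) * (u i ⬝ᵥ (M *ᵥ w j)) := by
    intro i
    have hvi : v i = ∑ j, (w j ⬝ᵥ v i) • w j := by
      ext k
      rw [Finset.sum_apply]
      exact (hres (v i) k).symm
    nth_rewrite 1 [hvi]
    rw [mulVec_sum', dot_sum_right]
    refine Finset.sum_congr rfl fun j _ => ?_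
    rw [Matrix.mulVec_smul, dotProduct_smul, smul_eq_mul]
  calc ∑ i ∈ s, u i ⬝ᵥ (M *ᵥ v i)
      = ∑ j, ∑ i ∈ s, (w j ⬝ᵥ v i) * (u i ⬝ᵥ (M *ᵥ w j)) := by
        rw [← Finset.sum_comm]
        exact Finset.sum_congr rfl fun i _ => hexp i
    _ ≤ ∑ j, Real.sqrt (lam j) := by
        refine Finset.sum_le_sum fun j _ => ?_
        have hcs := cs_sum (s := s) (fun i => w j ⬝ᵥ v i) (fun i => u i ⬝ᵥ (M *ᵥ w j))
        have hb1 : ∑ i ∈ s, (w j ⬝ᵥ v i) ^ 2 ≤ 1 := by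
          have h := bessel (s := s) (x := v) hv (w j)
          have h2 : ∀ i ∈ s, (w j ⬝ᵥ v i) ^ 2 = (v i ⬝ᵥ w j) ^ 2 := fun i _ => by
            rw [dotProduct_comm]
          rw [Finset.sum_congr rfl h2]
          calc ∑ i ∈ s, (v i ⬝ᵥ w j) ^ 2 ≤ w j ⬝ᵥ w j := h
            _ = 1 := by rw [hw j j, if_pos rfl]
        have hb2 : ∑ i ∈ s, (u i ⬝ᵥ (M *ᵥ w j)) ^ 2 ≤ lam j := by
          calc ∑ i ∈ s, (u i ⬝ᵥ (M *ᵥ w j)) ^ 2 ≤ (M *ᵥ w j) ⬝ᵥ (M *ᵥ w j) :=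
                bessel (s := s) (x := u) hu (M *ᵥ w j)
            _ = lam j := by
                rw [mulVec_dot, hMw j, dotProduct_smul, smul_eq_mul, hw j j,
                  if_pos rfl, mul_one]
        calc ∑ i ∈ s, (w j ⬝ᵥ v i) * (u i ⬝ᵥ (M *ᵥ w j)) ≤ _ := hcs
          _ ≤ Real.sqrt 1 * Real.sqrt (lam j) := by
              have := Real.sqrt_le_sqrt hb1
              have := Real.sqrt_le_sqrt hb2
              have h0 : (0:ℝ) ≤ Real.sqrt (∑ i ∈ s, (w j ⬝ᵥ v i) ^ 2) := Real.sqrt_nonneg _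
              have h0' : (0:ℝ) ≤ Real.sqrt (lam j) := Real.sqrt_nonneg _
              exact mul_le_mul ‹_› ‹_› (Real.sqrt_nonneg _) (by positivity)
          _ = Real.sqrt (lam j) := by rw [Real.sqrt_one, one_mul]
    _ = traceNorm M := hN.symm

/-- The trace norm is attained by a pairing against orthonormal families. -/
lemma traceNorm_attained (M : Matrix (Fin d) (Fin d) ℝ) :
    ∃ (s : Finset (Fin d)) (u v : Fin d → (Fin d → ℝ)),
      (∀ i ∈ s, ∀ j ∈ s, u i ⬝ᵥ u j = if i = j then 1 else 0) ∧
      (∀ i ∈ s, ∀ j ∈ s, v i ⬝ᵥ v j = if i = j then 1 else 0) ∧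
      traceNorm M = ∑ i ∈ s, u i ⬝ᵥ (M *ᵥ v i) := by
  obtain ⟨lam, w, hlam, hw, hMw, hres, hN⟩ := singular_package M
  set s : Finset (Fin d) := Finset.univ.filter (fun j => lam j ≠ 0) with hs
  have hlampos : ∀ j ∈ s, 0 < lam j := fun j hj => by
    have := (Finset.mem_filter.mp hj).2
    exact lt_of_le_of_ne (hlam j) (Ne.symm this)
  set u : Fin d → (Fin d → ℝ) := fun j => (Real.sqrt (lam j))⁻¹ • (M *ᵥ w j) with hu
  have hMdot : ∀ i j, (M *ᵥ w i) ⬝ᵥ (M *ᵥ w j) = if i = j then lam j else 0 := by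
    intro i j
    rw [mulVec_dot, hMw j, dotProduct_smul, smul_eq_mul, hw i j]
    by_cases h : i = j <;> simp [h]
  refine ⟨s, u, w, ?_, fun i _ j _ => hw i j, ?_⟩
  · intro i hi j hj
    rw [hu]
    simp only [smul_dotProduct, dotProduct_smul, smul_eq_mul]
    rw [hMdot i j]
    by_cases h : i = j
    · subst h
      rw [if_pos rfl, if_pos rfl]
      have h1 : 0 < lam i := hlampos i hi
      rw [← Real.sqrt_mul_self h1.le] at *
      field_simp
      rw [Real.sq_sqrt (Real.sqrt_nonneg _)]
      exact div_self (ne_of_gt (by rw [sq]; exact h1))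
    · rw [if_neg h, if_neg h, mul_zero, mul_zero]
  · rw [hN]
    have hzero : ∀ j ∈ Finset.univ \ s, Real.sqrt (lam j) = 0 := by
      intro j hj
      have := Finset.mem_sdiff.mp hj
      have h2 : lam j = 0 := by
        by_contra hne
        exact this.2 (Finset.mem_filter.mpr ⟨Finset.mem_univ _, hne⟩)
      rw [h2, Real.sqrt_zero]
    have hsum : ∑ j, Real.sqrt (lam j) = ∑ j ∈ s, Real.sqrt (lam j) := by
      rw [← Finset.sum_subset (Finset.subset_univ s)]
      intro x _ hx
      exact hzero x (Finset.mem_sdiff.mpr ⟨Finset.mem_univ _, hx⟩)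
    rw [hsum]
    refine Finset.sum_congr rfl fun j hj => ?_
    rw [hu]
    simp only [smul_dotProduct, smul_eq_mul]
    rw [hMdot j j, if_pos rfl]
    have h1 : 0 < lam j := hlampos j hj
    rw [← Real.sqrt_mul_self h1.le]
    have h2 : Real.sqrt (lam j) ≠ 0 := by positivity
    field_simp
    rw [Real.sq_sqrt (Real.sqrt_nonneg _)]

lemma dot_self_nonneg (a : Fin d → ℝ) : 0 ≤ a ⬝ᵥ a :=
  Finset.sum_nonneg fun k _ => mul_self_nonneg (a k)

lemma dot_self_eq_sq (a : Fin d → ℝ) : a ⬝ᵥ a = ∑ k, a k ^ 2 :=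
  Finset.sum_congr rfl fun k _ => (sq (a k)).symm

lemma cs_dot (a b : Fin d → ℝ) :
    a ⬝ᵥ b ≤ Real.sqrt (a ⬝ᵥ a) * Real.sqrt (b ⬝ᵥ b) := by
  rw [dot_self_eq_sq, dot_self_eq_sq]
  exact cs_sum (s := Finset.univ) a b

lemma frob_nonneg (A : Matrix (Fin d) (Fin d) ℝ) : 0 ≤ frob A := Real.sqrt_nonneg _

lemma trace_tmul_nonneg (A : Matrix (Fin d) (Fin d) ℝ) : 0 ≤ (Aᵀ * A).trace := by
  rw [Matrix.trace]
  refine Finset.sum_nonneg fun k _ => ?_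
  rw [Matrix.diag_apply, Matrix.mul_apply]
  exact Finset.sum_nonneg fun l _ => by
    rw [Matrix.transpose_apply]; exact mul_self_nonneg _

lemma frob_sq (A : Matrix (Fin d) (Fin d) ℝ) : frob A ^ 2 = (Aᵀ * A).trace :=
  Real.sq_sqrt (trace_tmul_nonneg A)

lemma traceNorm_triangle (M N : Matrix (Fin d) (Fin d) ℝ) :
    traceNorm (M + N) ≤ traceNorm M + traceNorm N := by
  obtain ⟨s, u, v, hu, hv, heq⟩ := traceNorm_attained (M + N)
  rw [heq]
  have : ∀ i ∈ s, u i ⬝ᵥ ((M + N) *ᵥ v i) = u i ⬝ᵥ (M *ᵥ v i) + u i ⬝ᵥ (N *ᵥ v i) := by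
    intro i _
    rw [Matrix.add_mulVec, dotProduct_add]
  rw [Finset.sum_congr rfl this, Finset.sum_add_distrib]
  exact add_le_add (traceNorm_dual M hu hv) (traceNorm_dual N hu hv)

lemma traceNorm_transpose (M : Matrix (Fin d) (Fin d) ℝ) :
    traceNorm Mᵀ = traceNorm M := by
  have key : ∀ (P : Matrix (Fin d) (Fin d) ℝ), traceNorm Pᵀ ≤ traceNorm P := by
    intro P
    obtain ⟨s, u, v, hu, hv, heq⟩ := traceNorm_attained Pᵀ
    rw [heq]
    have : ∀ i ∈ s, u i ⬝ᵥ (Pᵀ *ᵥ v i) = v i ⬝ᵥ (P *ᵥ u i) := by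
      intro i _
      rw [dotProduct_mulVec, Matrix.vecMul_transpose, dotProduct_comm]
    rw [Finset.sum_congr rfl this]
    exact traceNorm_dual P hv hu
  have h2 := key Mᵀ
  rw [Matrix.transpose_transpose] at h2
  exact le_antisymm (key M) h2

lemma traceNorm_holder (A B : Matrix (Fin d) (Fin d) ℝ) :
    traceNorm (A * B) ≤ frob A * frob B := by
  obtain ⟨s, u, v, hu, hv, heq⟩ := traceNorm_attained (A * B)
  rw [heq]
  have hsplit : ∀ i ∈ s, u i ⬝ᵥ ((A * B) *ᵥ v i) = (Aᵀ *ᵥ u i) ⬝ᵥ (B *ᵥ v i) := by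
    intro i _
    rw [← Matrix.mulVec_mulVec, dotProduct_mulVec (u i) A,
      ← Matrix.vecMul_transpose Aᵀ (u i), Matrix.transpose_transpose]
  rw [Finset.sum_congr rfl hsplit]
  have hA : ∑ i ∈ s, (Aᵀ *ᵥ u i) ⬝ᵥ (Aᵀ *ᵥ u i) ≤ frob A ^ 2 := by
    have hent : ∀ i, (Aᵀ *ᵥ u i) ⬝ᵥ (Aᵀ *ᵥ u i) = ∑ k, (u i ⬝ᵥ (fun l => A l k)) ^ 2 := by
      intro i
      rw [dotProduct]
      refine Finset.sum_congr rfl fun k _ => ?_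
      have : (Aᵀ *ᵥ u i) k = u i ⬝ᵥ (fun l => A l k) := by
        rw [Matrix.mulVec, dotProduct, dotProduct]
        exact Finset.sum_congr rfl fun l _ => by rw [Matrix.transpose_apply]; ring
      rw [this, sq]
    rw [Finset.sum_congr rfl fun i _ => hent i, Finset.sum_comm, frob_sq]
    rw [Matrix.trace]
    refine Finset.sum_le_sum fun k _ => ?_
    have := bessel (s := s) (x := u) hu (fun l => A l k)
    calc ∑ i ∈ s, (u i ⬝ᵥ fun l => A l k) ^ 2 ≤ (fun l => A l k) ⬝ᵥ (fun l => A l k) := this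
      _ = (Aᵀ * A) k k := by
          rw [Matrix.mul_apply, dotProduct]
          exact Finset.sum_congr rfl fun l _ => by rw [Matrix.transpose_apply]
      _ = (Aᵀ * A).diag k := rfl
  have hB : ∑ i ∈ s, (B *ᵥ v i) ⬝ᵥ (B *ᵥ v i) ≤ frob B ^ 2 := by
    have hent : ∀ i, (B *ᵥ v i) ⬝ᵥ (B *ᵥ v i) = ∑ k, (v i ⬝ᵥ (fun l => B k l)) ^ 2 := by
      intro i
      rw [dotProduct]
      refine Finset.sum_congr rfl fun k _ => ?_
      have : (B *ᵥ v i) k = v i ⬝ᵥ (fun l => B k l) := by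
        rw [Matrix.mulVec, dotProduct, dotProduct]
        exact Finset.sum_congr rfl fun l _ => by ring
      rw [this, sq]
    rw [Finset.sum_congr rfl fun i _ => hent i, Finset.sum_comm, frob_sq]
    have htr : (Bᵀ * B).trace = ∑ k, (fun l => B k l) ⬝ᵥ (fun l => B k l) := by
      rw [Matrix.trace]
      have h1 : ∀ j, (Bᵀ * B).diag j = ∑ k, B k j * B k j := by
        intro j
        rw [Matrix.diag_apply, Matrix.mul_apply]
        exact Finset.sum_congr rfl fun k _ => by rw [Matrix.transpose_apply]
      rw [Finset.sum_congr rfl fun j _ => h1 j, Finset.sum_comm]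
      exact Finset.sum_congr rfl fun k _ => rfl
    rw [htr]
    exact Finset.sum_le_sum fun k _ => bessel (s := s) (x := v) hv (fun l => B k l)
  -- combine via Cauchy–Schwarz
  set a : Fin d → ℝ := fun i => Real.sqrt ((Aᵀ *ᵥ u i) ⬝ᵥ (Aᵀ *ᵥ u i)) with ha
  set b : Fin d → ℝ := fun i => Real.sqrt ((B *ᵥ v i) ⬝ᵥ (B *ᵥ v i)) with hb
  calc ∑ i ∈ s, (Aᵀ *ᵥ u i) ⬝ᵥ (B *ᵥ v i) ≤ ∑ i ∈ s, a i * b i :=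
        Finset.sum_le_sum fun i _ => cs_dot _ _
    _ ≤ Real.sqrt (∑ i ∈ s, a i ^ 2) * Real.sqrt (∑ i ∈ s, b i ^ 2) := cs_sum a b
    _ ≤ Real.sqrt (frob A ^ 2) * Real.sqrt (frob B ^ 2) := by
        have e1 : ∑ i ∈ s, a i ^ 2 = ∑ i ∈ s, (Aᵀ *ᵥ u i) ⬝ᵥ (Aᵀ *ᵥ u i) :=
          Finset.sum_congr rfl fun i _ => Real.sq_sqrt (dot_self_nonneg _)
        have e2 : ∑ i ∈ s, b i ^ 2 = ∑ i ∈ s, (B *ᵥ v i) ⬝ᵥ (B *ᵥ v i) :=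
          Finset.sum_congr rfl fun i _ => Real.sq_sqrt (dot_self_nonneg _)
        rw [e1, e2]
        exact mul_le_mul (Real.sqrt_le_sqrt hA) (Real.sqrt_le_sqrt hB)
          (Real.sqrt_nonneg _) (Real.sqrt_nonneg _)
    _ = frob A * frob B := by
        rw [Real.sqrt_sq (frob_nonneg A), Real.sqrt_sq (frob_nonneg B)]

section conjdiag
variable {V : Matrix (Fin d) (Fin d) ℝ}

lemma cd_mul (hV1 : Vᵀ * V = 1) (a b : Fin d → ℝ) :
    (V * diagonal a * Vᵀ) * (V * diagonal b * Vᵀ) = V * diagonal (fun i => a i * b i) * Vᵀ := by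
  have : diagonal a * diagonal b = diagonal (fun i => a i * b i) := by
    rw [diagonal_mul_diagonal]
  calc (V * diagonal a * Vᵀ) * (V * diagonal b * Vᵀ)
      = V * diagonal a * (Vᵀ * V) * diagonal b * Vᵀ := by
        simp only [Matrix.mul_assoc]
    _ = V * (diagonal a * diagonal b) * Vᵀ := by rw [hV1]; simp only [Matrix.mul_assoc, Matrix.mul_one]
    _ = _ := by rw [this]

lemma cd_trace (hV1 : Vᵀ * V = 1) (a : Fin d → ℝ) : (V * diagonal a * Vᵀ).trace = ∑ i, a i := by
  rw [Matrix.trace_mul_cycle, hV1, Matrix.one_mul, Matrix.trace_diagonal]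

lemma cd_transpose (a : Fin d → ℝ) : (V * diagonal a * Vᵀ)ᵀ = V * diagonal a * Vᵀ := by
  rw [Matrix.transpose_mul, Matrix.transpose_mul, Matrix.transpose_transpose,
    Matrix.diagonal_transpose, Matrix.mul_assoc]

lemma cd_psd (a : Fin d → ℝ) (ha : ∀ i, 0 ≤ a i) : (V * diagonal a * Vᵀ).PosSemidef := by
  have h1 : (diagonal a).PosSemidef := Matrix.PosSemidef.diagonal ha
  have := h1.mul_mul_conjTranspose_same V
  rwa [conjTranspose_eq_transpose_of_trivial] at this

lemma cd_frob_sq (hV1 : Vᵀ * V = 1) (a : Fin d → ℝ) : frob (V * diagonal a * Vᵀ) ^ 2 = ∑ i, a i ^ 2 := by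
  rw [frob_sq, cd_transpose, cd_mul hV1]
  rw [cd_trace hV1]
  exact Finset.sum_congr rfl fun i _ => (sq (a i)).symm

lemma cd_add (a b : Fin d → ℝ) :
    V * diagonal a * Vᵀ + V * diagonal b * Vᵀ = V * diagonal (fun i => a i + b i) * Vᵀ := by
  have : diagonal a + diagonal b = diagonal (fun i => a i + b i) := (diagonal_add a b)
  rw [← this, Matrix.mul_add, Matrix.add_mul]

lemma cd_smul_one (hV2 : V * Vᵀ = 1) (c : ℝ) : c • (1 : Matrix (Fin d) (Fin d) ℝ) = V * diagonal (fun _ => c) * Vᵀ := by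
  have h1 : diagonal (fun _ : Fin d => c) = c • (1 : Matrix (Fin d) (Fin d) ℝ) := by
    ext i j
    by_cases h : i = j <;>
      simp [Matrix.diagonal_apply, Matrix.one_apply, h]
  rw [h1]
  rw [Matrix.mul_smul, Matrix.smul_mul, Matrix.mul_one, hV2]

lemma cd_inv (hV1 : Vᵀ * V = 1) (hV2 : V * Vᵀ = 1) (a : Fin d → ℝ) (ha : ∀ i, a i ≠ 0) :
    (V * diagonal a * Vᵀ)⁻¹ = V * diagonal (fun i => (a i)⁻¹) * Vᵀ := by
  apply Matrix.inv_eq_right_inv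
  rw [cd_mul hV1]
  have : (fun i => a i * (a i)⁻¹) = fun _ : Fin d => (1:ℝ) := by
    funext i; exact mul_inv_cancel₀ (ha i)
  rw [this]
  have h2 := cd_smul_one (V := V) hV2 (1:ℝ)
  rw [one_smul] at h2
  exact h2.symm

end conjdiag

/-- Key inequality: AM–GM-type bound for the trace norm. -/
lemma key_ineq {P Q C : Matrix (Fin d) (Fin d) ℝ} (hP : P.PosSemidef) (hQ : Q.PosSemidef)
    (hC : IsUnit C.det) :
    2 * traceNorm (psdSqrt P * psdSqrt Q) ≤ (Cᵀ * C * P).trace + ((Cᵀ * C)⁻¹ * Q).trace := by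
  have hCt : IsUnit Cᵀ.det := by rwa [Matrix.det_transpose]
  have hsplit : psdSqrt P * psdSqrt Q = (psdSqrt P * Cᵀ) * ((Cᵀ)⁻¹ * psdSqrt Q) := by
    rw [Matrix.mul_assoc, ← Matrix.mul_assoc Cᵀ, Matrix.mul_nonsing_inv _ hCt, Matrix.one_mul]
  have h1 : traceNorm (psdSqrt P * psdSqrt Q) ≤ frob (psdSqrt P * Cᵀ) * frob ((Cᵀ)⁻¹ * psdSqrt Q) := by
    rw [hsplit]; exact traceNorm_holder _ _
  have hf1 : frob (psdSqrt P * Cᵀ) ^ 2 = (Cᵀ * C * P).trace := by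
    rw [frob_sq, Matrix.transpose_mul, Matrix.transpose_transpose, psdSqrt_transpose hP]
    calc (C * psdSqrt P * (psdSqrt P * Cᵀ)).trace
        = (C * (psdSqrt P * psdSqrt P) * Cᵀ).trace := by
          simp only [Matrix.mul_assoc]
      _ = (C * P * Cᵀ).trace := by rw [psdSqrt_mul_self hP]
      _ = (Cᵀ * C * P).trace := by rw [Matrix.trace_mul_cycle]
  have hf2 : frob ((Cᵀ)⁻¹ * psdSqrt Q) ^ 2 = ((Cᵀ * C)⁻¹ * Q).trace := by
    rw [frob_sq, Matrix.transpose_mul, Matrix.transpose_nonsing_inv, Matrix.transpose_transpose,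
      psdSqrt_transpose hQ]
    calc (psdSqrt Q * C⁻¹ * ((Cᵀ)⁻¹ * psdSqrt Q)).trace
        = ((C⁻¹ * (Cᵀ)⁻¹) * (psdSqrt Q * psdSqrt Q)).trace := by
          have e : psdSqrt Q * C⁻¹ * ((Cᵀ)⁻¹ * psdSqrt Q)
              = psdSqrt Q * (C⁻¹ * ((Cᵀ)⁻¹ * psdSqrt Q)) := by
            simp only [Matrix.mul_assoc]
          rw [e, Matrix.trace_mul_comm]
          simp only [Matrix.mul_assoc]
      _ = ((Cᵀ * C)⁻¹ * Q).trace := by rw [psdSqrt_mul_self hQ, ← Matrix.mul_inv_rev]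
  have h2 : 2 * (frob (psdSqrt P * Cᵀ) * frob ((Cᵀ)⁻¹ * psdSqrt Q)) ≤
      frob (psdSqrt P * Cᵀ) ^ 2 + frob ((Cᵀ)⁻¹ * psdSqrt Q) ^ 2 := by
    nlinarith [sq_nonneg (frob (psdSqrt P * Cᵀ) - frob ((Cᵀ)⁻¹ * psdSqrt Q))]
  calc 2 * traceNorm (psdSqrt P * psdSqrt Q)
      ≤ 2 * (frob (psdSqrt P * Cᵀ) * frob ((Cᵀ)⁻¹ * psdSqrt Q)) := by linarith
    _ ≤ _ := by rw [← hf1, ← hf2] at *; exact h2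

lemma psd_add_smul_one_posDef {P : Matrix (Fin d) (Fin d) ℝ} (hP : P.PosSemidef)
    {ε : ℝ} (hε : 0 < ε) : (P + ε • 1).PosDef := by
  exact Matrix.PosDef.posSemidef_add hP (Matrix.PosDef.one.smul hε)

lemma cd_det {V : Matrix (Fin d) (Fin d) ℝ} (hV1 : Vᵀ * V = 1) (a : Fin d → ℝ) :
    (V * diagonal a * Vᵀ).det = ∏ i, a i := by
  rw [Matrix.det_mul, Matrix.det_mul, Matrix.det_diagonal, Matrix.det_transpose]
  have h : V.det * V.det = 1 := by
    have := congrArg Matrix.det hV1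
    rwa [Matrix.det_mul, Matrix.det_transpose, Matrix.det_one] at this
  linear_combination (∏ i, a i) * h

lemma sqrt_add_le (a ε : ℝ) (ha : 0 ≤ a) (hε : 0 ≤ ε) :
    Real.sqrt (a + ε) ≤ Real.sqrt a + Real.sqrt ε := by
  have h : a + ε ≤ (Real.sqrt a + Real.sqrt ε) ^ 2 := by
    have h1 := Real.sq_sqrt ha
    have h2 := Real.sq_sqrt hε
    nlinarith [Real.sqrt_nonneg a, Real.sqrt_nonneg ε]
  calc Real.sqrt (a + ε) ≤ Real.sqrt ((Real.sqrt a + Real.sqrt ε) ^ 2) := Real.sqrt_le_sqrt h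
    _ = Real.sqrt a + Real.sqrt ε := Real.sqrt_sq (by positivity)

/-- Perturbation bound for the PSD square root along `P ↦ P + ε•1`. -/
lemma sqrt_perturb {P : Matrix (Fin d) (Fin d) ℝ} (hP : P.PosSemidef) {ε : ℝ} (hε : 0 ≤ ε) :
    frob (psdSqrt (P + ε • 1) - psdSqrt P) ≤ Real.sqrt (d * ε) := by
  obtain ⟨lam, V, hlam, hV1, hV2, hdec, hsqrt⟩ := spectral_package hP
  have hPe : P + ε • 1 = V * diagonal (fun i => lam i + ε) * Vᵀ := by
    rw [hdec, cd_smul_one hV2 ε, cd_add]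
  have hPe_psd : (P + ε • 1).PosSemidef := by
    rw [hPe]
    exact cd_psd (fun i => lam i + ε) (fun i => show (0:ℝ) ≤ lam i + ε by linarith [hlam i])
  have hsqrtPe : psdSqrt (P + ε • 1) = V * diagonal (fun i => Real.sqrt (lam i + ε)) * Vᵀ := by
    refine psdSqrt_eq_of_sq hPe_psd (cd_psd _ fun i => Real.sqrt_nonneg _) ?_
    rw [cd_mul hV1, hPe]
    have he : (fun i => Real.sqrt (lam i + ε) * Real.sqrt (lam i + ε)) =
        fun i => lam i + ε :=
      funext fun i => Real.mul_self_sqrt (by linarith [hlam i])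
    rw [he]
  have hdiff : psdSqrt (P + ε • 1) - psdSqrt P =
      V * diagonal (fun i => Real.sqrt (lam i + ε) - Real.sqrt (lam i)) * Vᵀ := by
    rw [hsqrtPe, hsqrt, sub_eq_iff_eq_add, cd_add]
    have he : (fun i => Real.sqrt (lam i + ε) - Real.sqrt (lam i) + Real.sqrt (lam i)) =
        fun i => Real.sqrt (lam i + ε) := funext fun i => by ring
    rw [he]
  rw [hdiff]
  have hfs : frob (V * diagonal (fun i => Real.sqrt (lam i + ε) - Real.sqrt (lam i)) * Vᵀ) ^ 2
      ≤ d * ε := by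
    rw [cd_frob_sq hV1]
    calc ∑ i, (Real.sqrt (lam i + ε) - Real.sqrt (lam i)) ^ 2 ≤ ∑ _i : Fin d, ε := by
          refine Finset.sum_le_sum fun i _ => ?_
          have h1 : Real.sqrt (lam i) ≤ Real.sqrt (lam i + ε) :=
            Real.sqrt_le_sqrt (by linarith)
          have h2 : Real.sqrt (lam i + ε) ≤ Real.sqrt (lam i) + Real.sqrt ε :=
            sqrt_add_le _ _ (hlam i) hε
          have h3 : Real.sqrt ε ^ 2 = ε := Real.sq_sqrt hε
          nlinarith [Real.sqrt_nonneg ε]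
      _ = d * ε := by
          rw [Finset.sum_const, Finset.card_univ, Fintype.card_fin, nsmul_eq_mul]
  calc frob _ = Real.sqrt (frob _ ^ 2) := (Real.sqrt_sq (frob_nonneg _)).symm
    _ ≤ Real.sqrt (d * ε) := Real.sqrt_le_sqrt hfs

/-- Near-attainment of the trace-norm term by an invertible congruence. -/
lemma attain {P Q : Matrix (Fin d) (Fin d) ℝ} (hP : P.PosSemidef) (hQ : Q.PosSemidef)
    {ε : ℝ} (hε : 0 < ε) :
    ∃ C : Matrix (Fin d) (Fin d) ℝ, IsUnit C.det ∧
      (Cᵀ * C * P).trace + ((Cᵀ * C)⁻¹ * Q).trace ≤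
        2 * traceNorm (psdSqrt P * psdSqrt Q) + d * ε +
          2 * frob (psdSqrt Q) * Real.sqrt (d * ε) := by
  set Pe := P + ε • (1 : Matrix (Fin d) (Fin d) ℝ) with hPedef
  have hPe : Pe.PosDef := psd_add_smul_one_posDef hP hε
  have hPes : Pe.PosSemidef := hPe.posSemidef
  set sP := psdSqrt Pe with hsPdef
  have hsP : sP.PosSemidef := psdSqrt_posSemidef hPes
  have hsPsym : sPᵀ = sP := psdSqrt_transpose hPes
  have hsq : sP * sP = Pe := psdSqrt_mul_self hPes
  have hsPU : IsUnit sP.det := by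
    have h1 : sP.det * sP.det = Pe.det := by rw [← Matrix.det_mul, hsq]
    have h2 : 0 < Pe.det := hPe.det_pos
    refine isUnit_iff_ne_zero.mpr fun h => ?_
    rw [h, mul_zero] at h1
    linarith
  have hsPinv_l : sP⁻¹ * sP = 1 := Matrix.nonsing_inv_mul _ hsPU
  have hsPinv_r : sP * sP⁻¹ = 1 := Matrix.mul_nonsing_inv _ hsPU
  have hsPinv_sym : (sP⁻¹)ᵀ = sP⁻¹ := by
    rw [Matrix.transpose_nonsing_inv, hsPsym]
  -- G = sP * Q * sP
  have hG : (sP * Q * sP).PosSemidef := by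
    have := hQ.conjTranspose_mul_mul_same sP
    rwa [conjTranspose_eq_transpose_of_trivial, hsPsym] at this
  obtain ⟨lam, V, hlam, hV1, hV2, hGdec, hGsqrt⟩ := spectral_package hG
  set σ : Fin d → ℝ := fun i => Real.sqrt (lam i) with hσdef
  have hσ : ∀ i, 0 ≤ σ i := fun i => Real.sqrt_nonneg _
  have hσsq : ∀ i, σ i * σ i = lam i := fun i => Real.mul_self_sqrt (hlam i)
  -- the trace norm identity
  have hTrS : traceNorm (psdSqrt Q * sP) = ∑ i, σ i := by
    have hMt : (psdSqrt Q * sP)ᵀ * (psdSqrt Q * sP) = sP * Q * sP := by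
      rw [Matrix.transpose_mul, hsPsym, psdSqrt_transpose hQ]
      calc sP * psdSqrt Q * (psdSqrt Q * sP) = sP * (psdSqrt Q * psdSqrt Q) * sP := by
            simp only [Matrix.mul_assoc]
        _ = sP * Q * sP := by rw [psdSqrt_mul_self hQ]
    rw [traceNorm, hMt, hGsqrt, cd_trace hV1]
  -- matrices R and B
  set R := V * diagonal (fun i => σ i + ε) * Vᵀ with hRdef
  set B := V * diagonal (fun i => Real.sqrt (σ i + ε)) * Vᵀ with hBdef
  have hBB : B * B = R := by
    rw [hBdef, hRdef, cd_mul hV1]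
    have he : (fun i => Real.sqrt (σ i + ε) * Real.sqrt (σ i + ε)) = fun i => σ i + ε :=
      funext fun i => Real.mul_self_sqrt (by have := hσ i; linarith)
    rw [he]
  have hBsym : Bᵀ = B := cd_transpose _
  have hRdet : R.det = ∏ i, (σ i + ε) := cd_det hV1 _
  have hRpos : ∀ i, 0 < σ i + ε := fun i => by have := hσ i; linarith
  have hBU : IsUnit B.det := by
    refine isUnit_iff_ne_zero.mpr fun h => ?_
    have h1 : B.det * B.det = R.det := by rw [← Matrix.det_mul, hBB]
    rw [h, mul_zero, hRdet] at h1
    have : 0 < ∏ i, (σ i + ε) := Finset.prod_pos fun i _ => hRpos i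
    linarith
  have hRinv : R⁻¹ = V * diagonal (fun i => (σ i + ε)⁻¹) * Vᵀ :=
    cd_inv hV1 hV2 _ (fun i => (hRpos i).ne')
  have hRRinv : R * R⁻¹ = 1 := by
    rw [hRinv, hRdef, cd_mul hV1]
    have he : (fun i => (σ i + ε) * (σ i + ε)⁻¹) = fun _ : Fin d => (1:ℝ) :=
      funext fun i => mul_inv_cancel₀ (hRpos i).ne'
    rw [he]
    have h2 := cd_smul_one (V := V) hV2 (1:ℝ)
    rw [one_smul] at h2
    exact h2.symm
  -- the congruence C
  have hCt : (B * sP⁻¹)ᵀ = sP⁻¹ * B := by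
    rw [Matrix.transpose_mul, hsPinv_sym, hBsym]
  have hCtC : (B * sP⁻¹)ᵀ * (B * sP⁻¹) = sP⁻¹ * R * sP⁻¹ := by
    rw [hCt, ← hBB]
    simp only [Matrix.mul_assoc]
  have hCCinv : ((B * sP⁻¹)ᵀ * (B * sP⁻¹))⁻¹ = sP * R⁻¹ * sP := by
    rw [hCtC]
    apply Matrix.inv_eq_right_inv
    calc sP⁻¹ * R * sP⁻¹ * (sP * R⁻¹ * sP)
        = sP⁻¹ * (R * ((sP⁻¹ * sP) * R⁻¹)) * sP := by simp only [Matrix.mul_assoc]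
      _ = sP⁻¹ * (R * R⁻¹) * sP := by rw [hsPinv_l, Matrix.one_mul]
      _ = sP⁻¹ * sP := by rw [hRRinv, Matrix.mul_one]
      _ = 1 := hsPinv_l
  -- Term 1
  have hT1 : ((B * sP⁻¹)ᵀ * (B * sP⁻¹) * P).trace ≤ (∑ i, σ i) + d * ε := by
    have hsplit : ((B * sP⁻¹)ᵀ * (B * sP⁻¹) * Pe).trace
        = ((B * sP⁻¹)ᵀ * (B * sP⁻¹) * P).trace
          + ε * ((B * sP⁻¹)ᵀ * (B * sP⁻¹)).trace := by
      rw [hPedef, Matrix.mul_add, Matrix.trace_add]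
      congr 1
      rw [Matrix.mul_smul, Matrix.trace_smul, smul_eq_mul, Matrix.mul_one]
    have hnn : 0 ≤ ((B * sP⁻¹)ᵀ * (B * sP⁻¹)).trace := trace_tmul_nonneg _
    have hPe_tr : ((B * sP⁻¹)ᵀ * (B * sP⁻¹) * Pe).trace = (∑ i, σ i) + d * ε := by
      rw [hCtC]
      have h1 : sP⁻¹ * R * sP⁻¹ * Pe = sP⁻¹ * R * (sP⁻¹ * Pe) := by
        simp only [Matrix.mul_assoc]
      rw [h1, Matrix.trace_mul_cycle]
      have h2 : sP⁻¹ * Pe * sP⁻¹ * R = R := by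
        rw [← hsq]
        calc sP⁻¹ * (sP * sP) * sP⁻¹ * R
            = (sP⁻¹ * sP) * ((sP * sP⁻¹) * R) := by simp only [Matrix.mul_assoc]
          _ = R := by rw [hsPinv_l, hsPinv_r, Matrix.one_mul, Matrix.one_mul]
      rw [h2, hRdef, cd_trace hV1, Finset.sum_add_distrib, Finset.sum_const,
        Finset.card_univ, Fintype.card_fin, nsmul_eq_mul]
    linarith [hsplit, hPe_tr, mul_nonneg hε.le hnn]
  -- Term 2
  have hT2 : (((B * sP⁻¹)ᵀ * (B * sP⁻¹))⁻¹ * Q).trace ≤ ∑ i, σ i := by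
    rw [hCCinv]
    have h1 : sP * R⁻¹ * sP * Q = sP * R⁻¹ * (sP * Q) := by simp only [Matrix.mul_assoc]
    rw [h1, Matrix.trace_mul_cycle]
    rw [Matrix.trace_mul_comm, hGdec, hRinv, cd_mul hV1, cd_trace hV1]
    refine Finset.sum_le_sum fun i _ => ?_
    rw [inv_mul_le_iff₀ (hRpos i)]
    have := hσsq i
    have := hσ i
    nlinarith
  refine ⟨B * sP⁻¹, ?_, ?_⟩
  · rw [Matrix.det_mul]
    exact hBU.mul (Matrix.isUnit_nonsing_inv_det sP hsPU)
  · have hpert : traceNorm (psdSqrt Q * sP) ≤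
        traceNorm (psdSqrt P * psdSqrt Q) + frob (psdSqrt Q) * Real.sqrt (d * ε) := by
      have hdecomp : psdSqrt Q * sP = psdSqrt Q * psdSqrt P + psdSqrt Q * (sP - psdSqrt P) := by
        rw [Matrix.mul_sub]
        abel
      have htri : traceNorm (psdSqrt Q * sP) ≤
          traceNorm (psdSqrt Q * psdSqrt P) + traceNorm (psdSqrt Q * (sP - psdSqrt P)) := by
        rw [hdecomp]; exact traceNorm_triangle _ _
      have htrans : traceNorm (psdSqrt Q * psdSqrt P) = traceNorm (psdSqrt P * psdSqrt Q) := by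
        have := traceNorm_transpose (psdSqrt P * psdSqrt Q)
        rw [Matrix.transpose_mul, psdSqrt_transpose hP, psdSqrt_transpose hQ] at this
        exact this
      have hhold : traceNorm (psdSqrt Q * (sP - psdSqrt P)) ≤
          frob (psdSqrt Q) * Real.sqrt (d * ε) := by
        calc traceNorm (psdSqrt Q * (sP - psdSqrt P))
            ≤ frob (psdSqrt Q) * frob (sP - psdSqrt P) := traceNorm_holder _ _
          _ ≤ frob (psdSqrt Q) * Real.sqrt (d * ε) := by
              exact mul_le_mul_of_nonneg_left (sqrt_perturb hP hε.le) (frob_nonneg _)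
      linarith
    have hfin := hTrS
    linarith [hT1, hT2, hpert]

lemma psd_smul {A : Matrix (Fin d) (Fin d) ℝ} (hA : A.PosSemidef) {c : ℝ} (hc : 0 ≤ c) :
    (c • A).PosSemidef := by
  exact hA.smul hc


lemma tn_eq {S₁ S₂ : Matrix (Fin d) (Fin d) ℝ} (hS₁ : S₁.PosSemidef) (hS₂ : S₂.PosSemidef) :
    (psdSqrt (psdSqrt S₂ * S₁ * psdSqrt S₂)).trace = traceNorm (psdSqrt S₁ * psdSqrt S₂) := by
  have harg : (psdSqrt S₁ * psdSqrt S₂)ᵀ * (psdSqrt S₁ * psdSqrt S₂)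
      = psdSqrt S₂ * S₁ * psdSqrt S₂ := by
    rw [Matrix.transpose_mul, psdSqrt_transpose hS₁, psdSqrt_transpose hS₂]
    calc psdSqrt S₂ * psdSqrt S₁ * (psdSqrt S₁ * psdSqrt S₂)
        = psdSqrt S₂ * (psdSqrt S₁ * psdSqrt S₁) * psdSqrt S₂ := by simp only [Matrix.mul_assoc]
      _ = psdSqrt S₂ * S₁ * psdSqrt S₂ := by rw [psdSqrt_mul_self hS₁]
  rw [traceNorm, harg]

lemma tn_le {S₁ S₂ : Matrix (Fin d) (Fin d) ℝ} (hS₁ : S₁.PosSemidef) (hS₂ : S₂.PosSemidef) :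
    2 * traceNorm (psdSqrt S₁ * psdSqrt S₂) ≤ S₁.trace + S₂.trace := by
  have h := key_ineq (C := (1 : Matrix (Fin d) (Fin d) ℝ)) hS₁ hS₂
    (by rw [Matrix.det_one]; exact isUnit_one)
  have h1inv : ((1 : Matrix (Fin d) (Fin d) ℝ))⁻¹ = 1 :=
    Matrix.inv_eq_right_inv (by rw [Matrix.one_mul])
  simpa [Matrix.transpose_one, Matrix.one_mul, h1inv] using h

lemma gelbrich_sq {μ₁ μ₂ : EuclideanSpace ℝ (Fin d)} {S₁ S₂ : Matrix (Fin d) (Fin d) ℝ}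
    (hS₁ : S₁.PosSemidef) (hS₂ : S₂.PosSemidef) :
    gelbrich μ₁ μ₂ S₁ S₂ ^ 2 =
      ‖μ₁ - μ₂‖ ^ 2 + S₁.trace + S₂.trace - 2 * traceNorm (psdSqrt S₁ * psdSqrt S₂) := by
  have htr : (S₁ + S₂ - 2 • psdSqrt (psdSqrt S₂ * S₁ * psdSqrt S₂)).trace
      = S₁.trace + S₂.trace - 2 * traceNorm (psdSqrt S₁ * psdSqrt S₂) := by
    rw [Matrix.trace_sub, Matrix.trace_add, ← tn_eq hS₁ hS₂]
    rw [Matrix.trace_smul]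
    simp [nsmul_eq_mul]
  rw [gelbrich, htr]
  have hnn : 0 ≤ ‖μ₁ - μ₂‖ ^ 2 + (S₁.trace + S₂.trace - 2 * traceNorm (psdSqrt S₁ * psdSqrt S₂)) := by
    have := tn_le hS₁ hS₂
    have h2 : (0:ℝ) ≤ ‖μ₁ - μ₂‖ ^ 2 := sq_nonneg _
    linarith
  rw [show ‖μ₁ - μ₂‖ ^ 2 + (S₁.trace + S₂.trace - 2 * traceNorm (psdSqrt S₁ * psdSqrt S₂))
      = ‖μ₁ - μ₂‖ ^ 2 + S₁.trace + S₂.trace - 2 * traceNorm (psdSqrt S₁ * psdSqrt S₂) from by ring] at hnn ⊢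
  exact Real.sq_sqrt hnn

/-- Concavity of the fidelity-type trace-norm term. -/
lemma tn_concave {S₁ S₂ T₁ T₂ : Matrix (Fin d) (Fin d) ℝ}
    (hS₁ : S₁.PosSemidef) (hS₂ : S₂.PosSemidef)
    (hT₁ : T₁.PosSemidef) (hT₂ : T₂.PosSemidef)
    {θ : ℝ} (hθ₀ : 0 ≤ θ) (hθ₁ : θ ≤ 1) :
    θ * traceNorm (psdSqrt S₁ * psdSqrt S₂) + (1 - θ) * traceNorm (psdSqrt T₁ * psdSqrt T₂) ≤
      traceNorm (psdSqrt (θ • S₁ + (1 - θ) • T₁) * psdSqrt (θ • S₂ + (1 - θ) • T₂)) := by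
  set P := θ • S₁ + (1 - θ) • T₁ with hPdef
  set Q := θ • S₂ + (1 - θ) • T₂ with hQdef
  have hP : P.PosSemidef := (psd_smul hS₁ hθ₀).add (psd_smul hT₁ (by linarith))
  have hQ : Q.PosSemidef := (psd_smul hS₂ hθ₀).add (psd_smul hT₂ (by linarith))
  refine le_of_forall_pos_le_add fun δ hδ => ?_
  set c := frob (psdSqrt Q) with hcdef
  have hc : 0 ≤ c := frob_nonneg _
  set ε := min (δ / (d + 1)) (δ ^ 2 / ((d + 1) * (2 * c + 1) ^ 2)) with hεdef
  have hε : 0 < ε := by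
    apply lt_min
    · positivity
    · positivity
  obtain ⟨C, hCU, hCest⟩ := attain hP hQ hε
  have hkS := key_ineq hS₁ hS₂ hCU
  have hkT := key_ineq hT₁ hT₂ hCU
  have hlin1 : θ * (Cᵀ * C * S₁).trace + (1 - θ) * (Cᵀ * C * T₁).trace = (Cᵀ * C * P).trace := by
    rw [hPdef, Matrix.mul_add, Matrix.trace_add, Matrix.mul_smul, Matrix.mul_smul,
      Matrix.trace_smul, Matrix.trace_smul, smul_eq_mul, smul_eq_mul]
  have hlin2 : θ * ((Cᵀ * C)⁻¹ * S₂).trace + (1 - θ) * ((Cᵀ * C)⁻¹ * T₂).trace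
      = ((Cᵀ * C)⁻¹ * Q).trace := by
    rw [hQdef, Matrix.mul_add, Matrix.trace_add, Matrix.mul_smul, Matrix.mul_smul,
      Matrix.trace_smul, Matrix.trace_smul, smul_eq_mul, smul_eq_mul]
  -- error bound
  have herr : (d : ℝ) * ε + 2 * c * Real.sqrt ((d : ℝ) * ε) ≤ 2 * δ := by
    have h1 : (d : ℝ) * ε ≤ δ := by
      have : ε ≤ δ / (d + 1) := min_le_left _ _
      have hd : (0:ℝ) < d + 1 := by positivity
      calc (d:ℝ) * ε ≤ (d:ℝ) * (δ / (d + 1)) := by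
            exact mul_le_mul_of_nonneg_left this (Nat.cast_nonneg d)
        _ ≤ δ := by
            have heq : (d:ℝ) * (δ / (d + 1)) = (d:ℝ) * δ / (d + 1) := by ring
            rw [heq, div_le_iff₀ hd]
            nlinarith [hδ.le, Nat.cast_nonneg (α := ℝ) d]
    have h2 : 2 * c * Real.sqrt ((d : ℝ) * ε) ≤ δ := by
      have hεle : ε ≤ δ ^ 2 / ((d + 1) * (2 * c + 1) ^ 2) := min_le_right _ _
      have hdle : (d : ℝ) * ε ≤ (δ / (2 * c + 1)) ^ 2 := by
        have hd : (0:ℝ) ≤ d := Nat.cast_nonneg d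
        have hpos : (0:ℝ) < (d + 1) * (2 * c + 1) ^ 2 := by positivity
        calc (d:ℝ) * ε ≤ (d:ℝ) * (δ ^ 2 / ((d + 1) * (2 * c + 1) ^ 2)) :=
              mul_le_mul_of_nonneg_left hεle hd
          _ ≤ (δ / (2 * c + 1)) ^ 2 := by
              have heq : (d:ℝ) * (δ ^ 2 / ((d + 1) * (2 * c + 1) ^ 2))
                  = ((d:ℝ) * δ ^ 2) / ((d + 1) * (2 * c + 1) ^ 2) := by ring
              rw [heq, div_pow, div_le_div_iff₀ hpos (by positivity)]
              nlinarith [sq_nonneg δ, sq_nonneg (2*c+1), hd]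
      have hsq : Real.sqrt ((d : ℝ) * ε) ≤ δ / (2 * c + 1) := by
        calc Real.sqrt ((d : ℝ) * ε) ≤ Real.sqrt ((δ / (2 * c + 1)) ^ 2) :=
              Real.sqrt_le_sqrt hdle
          _ = δ / (2 * c + 1) := Real.sqrt_sq (by positivity)
      calc 2 * c * Real.sqrt ((d : ℝ) * ε) ≤ 2 * c * (δ / (2 * c + 1)) := by
            exact mul_le_mul_of_nonneg_left hsq (by positivity)
        _ ≤ δ := by
            have heq : 2 * c * (δ / (2 * c + 1)) = 2 * c * δ / (2 * c + 1) := by ring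
            rw [heq, div_le_iff₀ (by positivity : (0:ℝ) < 2 * c + 1)]
            nlinarith [hδ.le, hc]
    linarith
  nlinarith [hkS, hkT, hlin1, hlin2, hCest, herr, hθ₀, hθ₁]

/-- Joint convexity of the squared Gelbrich distance. -/
theorem gelbrich_sq_convex {d : ℕ}
    (μ₁ μ₂ ν₁ ν₂ : EuclideanSpace ℝ (Fin d))
    (S₁ S₂ T₁ T₂ : Matrix (Fin d) (Fin d) ℝ)
    (hS₁ : S₁.PosSemidef) (hS₂ : S₂.PosSemidef)
    (hT₁ : T₁.PosSemidef) (hT₂ : T₂.PosSemidef)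
    (θ : ℝ) (hθ₀ : 0 ≤ θ) (hθ₁ : θ ≤ 1) :
    gelbrich (θ • μ₁ + (1 - θ) • ν₁) (θ • μ₂ + (1 - θ) • ν₂)
        (θ • S₁ + (1 - θ) • T₁) (θ • S₂ + (1 - θ) • T₂) ^ 2
      ≤ θ * gelbrich μ₁ μ₂ S₁ S₂ ^ 2 + (1 - θ) * gelbrich ν₁ ν₂ T₁ T₂ ^ 2 := by
  have hθ' : 0 ≤ 1 - θ := by linarith
  have hP : (θ • S₁ + (1 - θ) • T₁).PosSemidef := (psd_smul hS₁ hθ₀).add (psd_smul hT₁ hθ')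
  have hQ : (θ • S₂ + (1 - θ) • T₂).PosSemidef := (psd_smul hS₂ hθ₀).add (psd_smul hT₂ hθ')
  rw [gelbrich_sq hP hQ, gelbrich_sq hS₁ hS₂, gelbrich_sq hT₁ hT₂]
  -- mean part
  have hmean : ‖(θ • μ₁ + (1 - θ) • ν₁) - (θ • μ₂ + (1 - θ) • ν₂)‖ ^ 2
      ≤ θ * ‖μ₁ - μ₂‖ ^ 2 + (1 - θ) * ‖ν₁ - ν₂‖ ^ 2 := by
    have hvec : (θ • μ₁ + (1 - θ) • ν₁) - (θ • μ₂ + (1 - θ) • ν₂)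
        = θ • (μ₁ - μ₂) + (1 - θ) • (ν₁ - ν₂) := by
      rw [smul_sub, smul_sub]; abel
    have hnorm : ‖(θ • μ₁ + (1 - θ) • ν₁) - (θ • μ₂ + (1 - θ) • ν₂)‖
        ≤ θ * ‖μ₁ - μ₂‖ + (1 - θ) * ‖ν₁ - ν₂‖ := by
      rw [hvec]
      calc ‖θ • (μ₁ - μ₂) + (1 - θ) • (ν₁ - ν₂)‖
          ≤ ‖θ • (μ₁ - μ₂)‖ + ‖(1 - θ) • (ν₁ - ν₂)‖ := norm_add_le _ _
        _ = θ * ‖μ₁ - μ₂‖ + (1 - θ) * ‖ν₁ - ν₂‖ := by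
            rw [norm_smul, norm_smul, Real.norm_of_nonneg hθ₀, Real.norm_of_nonneg hθ']
    have h1 : ‖(θ • μ₁ + (1 - θ) • ν₁) - (θ • μ₂ + (1 - θ) • ν₂)‖ ^ 2
        ≤ (θ * ‖μ₁ - μ₂‖ + (1 - θ) * ‖ν₁ - ν₂‖) ^ 2 := by
      have := norm_nonneg ((θ • μ₁ + (1 - θ) • ν₁) - (θ • μ₂ + (1 - θ) • ν₂))
      nlinarith [hnorm]
    have h2 : (θ * ‖μ₁ - μ₂‖ + (1 - θ) * ‖ν₁ - ν₂‖) ^ 2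
        ≤ θ * ‖μ₁ - μ₂‖ ^ 2 + (1 - θ) * ‖ν₁ - ν₂‖ ^ 2 := by
      nlinarith [sq_nonneg (‖μ₁ - μ₂‖ - ‖ν₁ - ν₂‖), mul_nonneg hθ₀ hθ',
        norm_nonneg (μ₁ - μ₂), norm_nonneg (ν₁ - ν₂)]
    linarith
  -- trace linearity
  have htr1 : (θ • S₁ + (1 - θ) • T₁).trace = θ * S₁.trace + (1 - θ) * T₁.trace := by
    rw [Matrix.trace_add, Matrix.trace_smul, Matrix.trace_smul, smul_eq_mul, smul_eq_mul]
  have htr2 : (θ • S₂ + (1 - θ) • T₂).trace = θ * S₂.trace + (1 - θ) * T₂.trace := by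
    rw [Matrix.trace_add, Matrix.trace_smul, Matrix.trace_smul, smul_eq_mul, smul_eq_mul]
  have hconc := tn_concave hS₁ hS₂ hT₁ hT₂ hθ₀ hθ₁
  nlinarith [hmean, htr1, htr2, hconc]
end
end
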